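/- arXiv:1604.05172 — 15 statements merged into one kernel-verified Lean document; each statement's English description precedes it below -/
import Mathlib

section
/- Let G be a finite connected simple graph on at least one vertex and let S be a dominating set of G whose induced subgraph has c(S) connected components. Then G has a connected dominating set S' with |S'| ≤ |S| + 2(c(S) − 1). -/
/-- `D` is a dominating set of `G`: every vertex is in `D` or adjacent to a vertex of `D`. -/
def IsDomSet {V : Type*} (G : SimpleGraph V) (D : Finset V) : Prop :=
  ∀ v : V, v ∈ D ∨ ∃ u ∈ D, G.Adj u v

/-- The number of connected components of the subgraph of `G` induced by `S`. -/
noncomputable def numComponents {V : Type*} (G : SimpleGraph V) (S : Finset V) : ℕ :=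
  Nat.card (G.induce (↑S : Set V)).ConnectedComponent

open SimpleGraph

/-- A walk whose support lies in `T` gives reachability in the induced graph. -/
lemma reach_of_walk_support {V : Type*} (G : SimpleGraph V) (T : Set V) :
    ∀ {u v : V} (p : G.Walk u v) (_ : ∀ x ∈ p.support, x ∈ T)
      (hu : u ∈ T) (hv : v ∈ T),
      (G.induce T).Reachable ⟨u, hu⟩ ⟨v, hv⟩ := by
  intro u v p
  induction p with
  | nil => intro _ hu hv; exact Reachable.refl _
  | @cons a b c h q ih =>
    intro hsupp hu hv
    have hb : b ∈ T := hsupp b (by simp [SimpleGraph.Walk.support_cons])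
    have hadj : (G.induce T).Adj ⟨a, hu⟩ ⟨b, hb⟩ := by
      simpa using h
    exact (hadj.reachable).trans
      (ih (fun x hx => hsupp x (by simp [SimpleGraph.Walk.support_cons, hx])) hb hv)

/-- Any vertex on a walk whose support lies in `T` is reachable from the start. -/
lemma reach_of_mem_support {V : Type*} [DecidableEq V] (G : SimpleGraph V) (T : Set V)
    {u v x : V} (p : G.Walk u v) (hsupp : ∀ y ∈ p.support, y ∈ T)
    (hx : x ∈ p.support) (hu : u ∈ T) :
    (G.induce T).Reachable ⟨u, hu⟩ ⟨x, hsupp x hx⟩ := by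
  have := reach_of_walk_support G T (p.takeUntil x hx)
    (fun y hy => hsupp y (SimpleGraph.Walk.support_takeUntil_subset p hx hy)) hu (hsupp x hx)
  exact this

lemma card_lt_of_surj_not_inj {α β : Type*} [Finite α] (f : α → β)
    (hs : Function.Surjective f) (hi : ¬ Function.Injective f) :
    Nat.card β < Nat.card α := by
  rcases lt_or_eq_of_le (Nat.card_le_card_of_surjective f hs) with h | h
  · exact h
  · exact absurd ((Nat.bijective_iff_surjective_and_card f).mpr ⟨hs, h.symm⟩).1 hi

/-- If `G` is a finite connected simple graph and `S` is a dominating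
set of `G` whose induced subgraph has `c(S)` connected components, then `G` has a
connected dominating set `S'` with `|S'| ≤ |S| + 2(c(S) − 1)`. -/
theorem connected_dominating_of_dominating {V : Type*} [Fintype V]
    (G : SimpleGraph V) (hG : G.Connected) (S : Finset V) (hS : IsDomSet G S) :
    ∃ S' : Finset V, IsDomSet G S' ∧ (G.induce (↑S' : Set V)).Connected ∧
      S'.card ≤ S.card + 2 * (numComponents G S - 1) := by
  classical
  -- strong induction on numComponents
  suffices H : ∀ n (S : Finset V), numComponents G S = n → IsDomSet G S →
      ∃ S' : Finset V, IsDomSet G S' ∧ (G.induce (↑S' : Set V)).Connected ∧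
        S'.card ≤ S.card + 2 * (n - 1) from H _ S rfl hS
  intro n
  induction n using Nat.strong_induction_on with
  | _ n ih =>
    intro S hn hS
    have hV : Nonempty V := hG.nonempty
    obtain ⟨v0⟩ := hV
    have hSne : S.Nonempty := by
      rcases hS v0 with h | ⟨u, hu, _⟩
      · exact ⟨v0, h⟩
      · exact ⟨u, hu⟩
    have hne : Nonempty (G.induce (↑S : Set V)).ConnectedComponent := by
      obtain ⟨x, hx⟩ := hSne
      exact ⟨(G.induce (↑S : Set V)).connectedComponentMk ⟨x, hx⟩⟩
    have hn1 : 1 ≤ n := by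
      rw [← hn]
      exact Nat.one_le_iff_ne_zero.mpr (Nat.card_ne_zero.mpr ⟨hne, inferInstance⟩)
    rcases eq_or_lt_of_le hn1 with h1 | h2
    · -- n = 1 : S itself is connected
      refine ⟨S, hS, ?_, by simp⟩
      have hcard1 : Nat.card (G.induce (↑S : Set V)).ConnectedComponent = 1 := by
        have hn' : Nat.card (G.induce (↑S : Set V)).ConnectedComponent = n := hn
        rw [hn', ← h1]
      obtain ⟨c, hc⟩ := Nat.card_eq_one_iff_exists.mp hcard1
      rw [SimpleGraph.connected_iff]
      constructor
      · intro u v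
        have : (G.induce (↑S : Set V)).connectedComponentMk u
            = (G.induce (↑S : Set V)).connectedComponentMk v := by
          rw [hc ((G.induce (↑S : Set V)).connectedComponentMk u), hc ((G.induce (↑S : Set V)).connectedComponentMk v)]
        exact (SimpleGraph.ConnectedComponent.eq).mp this
      · obtain ⟨x, hx⟩ := hSne
        exact ⟨⟨x, hx⟩⟩
    · -- n ≥ 2 : merge two components
      -- there exist two vertices of S in different components
      have hnt : Nontrivial (G.induce (↑S : Set V)).ConnectedComponent := by
        rw [← Finite.one_lt_card_iff_nontrivial]
        have hn' : Nat.card (G.induce (↑S : Set V)).ConnectedComponent = n := hn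
        rw [hn']; exact h2
      obtain ⟨c1, c2, hcne⟩ := hnt
      obtain ⟨⟨a0, ha0⟩, rfl⟩ := c1.exists_rep
      obtain ⟨⟨b0, hb0⟩, rfl⟩ := c2.exists_rep
      -- predicate: there is a pair in different components joined by a walk of length k
      set Q : ℕ → Prop := fun k => ∃ a, ∃ ha : a ∈ (↑S : Set V), ∃ b, ∃ hb : b ∈ (↑S : Set V),
        ¬ (G.induce (↑S : Set V)).Reachable ⟨a, ha⟩ ⟨b, hb⟩ ∧
        ∃ p : G.Walk a b, p.length = k with hQ
      have hQex : ∃ k, Q k := by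
        obtain ⟨p⟩ := hG.preconnected a0 b0
        exact ⟨p.length, a0, ha0, b0, hb0,
          fun hr => hcne ((SimpleGraph.ConnectedComponent.eq).mpr hr), p, rfl⟩
      have hQdec : DecidablePred Q := fun k => Classical.dec _
      set d := Nat.find hQex with hd
      obtain ⟨a, ha, b, hb, hreach, p, hp⟩ := Nat.find_spec hQex
      have hmin : ∀ m, m < d → ¬ Q m := fun m hm => Nat.find_min hQex hm
      -- d ≤ 3
      have hd3 : d ≤ 3 := by
        by_contra hd4
        push_neg at hd4
        -- p has length ≥ 4, destructure first two edges
        cases p with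
        | nil => simp at hp; omega
        | cons h1 q1 =>
          cases q1 with
          | nil =>
            simp [SimpleGraph.Walk.length_cons] at hp; omega
          | @cons x y _ h2 q =>
            -- p = a -h1- x -h2- y then q : Walk y b, length q = d - 2
            have hq : q.length = d - 2 := by
              simp [SimpleGraph.Walk.length_cons] at hp; omega
            -- y is dominated
            rcases hS y with hyS | ⟨s, hsS, hadj⟩
            · -- y itself in S
              by_cases hr : (G.induce (↑S : Set V)).Reachable ⟨a, ha⟩ ⟨y, hyS⟩
              · -- pair (y, b) with walk q of length d-2 < d
                exact hmin (d - 2) (by omega) ⟨y, hyS, b, hb,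
                  fun h => hreach (hr.trans h), q, hq⟩
              · -- pair (a, y) with walk of length 2
                exact hmin 2 (by omega) ⟨a, ha, y, hyS, hr,
                  SimpleGraph.Walk.cons h1 (SimpleGraph.Walk.cons h2 SimpleGraph.Walk.nil),
                  by simp⟩
            · have hsS' : s ∈ (↑S : Set V) := hsS
              by_cases hr : (G.induce (↑S : Set V)).Reachable ⟨a, ha⟩ ⟨s, hsS'⟩
              · -- pair (s, b) with walk s-y ++ q, length d-1 < d
                exact hmin (d - 1) (by omega) ⟨s, hsS', b, hb,
                  fun h => hreach (hr.trans h),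
                  SimpleGraph.Walk.cons hadj q, by simp [hq]; omega⟩
              · -- pair (a, s) with walk a-x-y-s, length 3 < d
                exact hmin 3 (by omega) ⟨a, ha, s, hsS', hr,
                  SimpleGraph.Walk.cons h1 (SimpleGraph.Walk.cons h2
                    (SimpleGraph.Walk.cons hadj.symm SimpleGraph.Walk.nil)), by simp⟩
      have hab : a ≠ b := fun h => hreach (by subst h; exact Reachable.refl _)
      -- new set T
      set P : Finset V := p.support.toFinset with hP
      set T : Finset V := S ∪ P with hT
      have hSsubT : S ⊆ T := Finset.subset_union_left
      have haP : a ∈ P := by simp [hP]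
      have hbP : b ∈ P := by simp [hP]
      have hsuppT : ∀ x ∈ p.support, x ∈ (↑T : Set V) := by
        intro x hx
        have : x ∈ T := by rw [hT, Finset.mem_union]; right; simp [hP, hx]
        exact this
      -- card bound
      have hcardP : P.card ≤ 4 := by
        calc P.card ≤ p.support.length := List.toFinset_card_le _
        _ = p.length + 1 := SimpleGraph.Walk.length_support p
        _ ≤ 4 := by omega
      have habsub : ({a, b} : Finset V) ⊆ P := by
        intro x hx; simp at hx; rcases hx with rfl | rfl <;> assumption
      have hcardT : T.card ≤ S.card + 2 := by
        have h1 : T.card ≤ S.card + (P \ S).card := by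
          rw [hT, ← Finset.union_sdiff_self_eq_union]; exact Finset.card_union_le _ _
        have h2 : (P \ S).card ≤ (P \ {a, b}).card := by
          apply Finset.card_le_card
          apply Finset.sdiff_subset_sdiff (le_refl _)
          intro x hx; simp at hx; rcases hx with rfl | rfl <;> assumption
        have h3 : (P \ ({a, b} : Finset V)).card = P.card - 2 := by
          rw [Finset.card_sdiff_of_subset habsub, Finset.card_insert_of_notMem (by simp [hab]),
            Finset.card_singleton]
        omega
      -- dominating
      have hTdom : IsDomSet G T := by
        intro v
        rcases hS v with h | ⟨u, hu, hadj⟩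
        · exact Or.inl (hSsubT h)
        · exact Or.inr ⟨u, hSsubT hu, hadj⟩
      -- component count decreases
      have hSsubT' : (↑S : Set V) ⊆ (↑T : Set V) := by
        intro x hx; exact hSsubT hx
      set f : G.induce (↑S : Set V) →g G.induce (↑T : Set V) :=
        ⟨fun v => ⟨v.1, hSsubT' v.2⟩, fun {u v} h => h⟩ with hf
      set φ := SimpleGraph.ConnectedComponent.map f with hφ
      have haT : (a : V) ∈ (↑T : Set V) := hSsubT' ha
      have hbT : (b : V) ∈ (↑T : Set V) := hSsubT' hb
      have hreachT : (G.induce (↑T : Set V)).Reachable ⟨a, haT⟩ ⟨b, hbT⟩ :=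
        reach_of_walk_support G _ p hsuppT haT hbT
      have hsurj : Function.Surjective φ := by
        intro c
        obtain ⟨⟨x, hx⟩, rfl⟩ := c.exists_rep
        have hx' : x ∈ T := hx
        rw [hT, Finset.mem_union] at hx'
        rcases hx' with hxS | hxP
        · exact ⟨(G.induce (↑S : Set V)).connectedComponentMk ⟨x, hxS⟩, rfl⟩
        · have hxs : x ∈ p.support := List.mem_toFinset.mp hxP
          refine ⟨(G.induce (↑S : Set V)).connectedComponentMk ⟨a, ha⟩, ?_⟩
          have hr : (G.induce (↑T : Set V)).Reachable ⟨a, haT⟩ ⟨x, hx⟩ :=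
            reach_of_mem_support G _ p hsuppT hxs haT
          simp only [hφ, SimpleGraph.ConnectedComponent.map_mk]
          exact (SimpleGraph.ConnectedComponent.eq).mpr hr
      have hninj : ¬ Function.Injective φ := by
        intro hinj
        apply hreach
        have : φ ((G.induce (↑S : Set V)).connectedComponentMk ⟨a, ha⟩)
            = φ ((G.induce (↑S : Set V)).connectedComponentMk ⟨b, hb⟩) := by
          simp only [hφ, SimpleGraph.ConnectedComponent.map_mk]
          exact (SimpleGraph.ConnectedComponent.eq).mpr hreachT
        exact (SimpleGraph.ConnectedComponent.eq).mp (hinj this)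
      have hlt : numComponents G T < n := by
        have hn' : Nat.card (G.induce (↑S : Set V)).ConnectedComponent = n := hn
        rw [← hn']
        exact card_lt_of_surj_not_inj φ hsurj hninj
      -- apply IH
      obtain ⟨S', hS'dom, hS'conn, hS'card⟩ :=
        ih (numComponents G T) hlt T rfl hTdom
      refine ⟨S', hS'dom, hS'conn, ?_⟩
      have hTne : T.Nonempty := hSne.mono hSsubT
      have hm1 : 1 ≤ numComponents G T := by
        obtain ⟨x, hx⟩ := hTne
        exact Nat.one_le_iff_ne_zero.mpr (Nat.card_ne_zero.mpr
          ⟨⟨(G.induce (↑T : Set V)).connectedComponentMk ⟨x, hx⟩⟩, inferInstance⟩)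
      omega
end

section
/- Let T be a tree with vertices listed in an order v_1, …, v_n such that every prefix graph T_i is connected, and let S be any dominating set of T whose induced subgraph has c(S) connected components. Then T has an incremental dominating set R'' with |R''| ≤ |S| + c(S). -/
/-- `D` is a dominating set of the prefix graph `G_i` (induced on the first `i`
vertices `v_1, …, v_i`, i.e. the vertices of `Fin n` with value `< i`);
here `D` is assumed to consist of vertices of the prefix, so that adjacency
in `G_i` coincides with adjacency in `G`. -/
def PrefixDom {n : ℕ} (G : SimpleGraph (Fin n)) (i : ℕ) (D : Finset (Fin n)) : Prop :=
  ∀ v : Fin n, v.val < i → v ∈ D ∨ ∃ u ∈ D, G.Adj u v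

/-- The natural ordering `v_1, …, v_n` of `Fin n` is always-connected:
every prefix graph `G_i` (for `1 ≤ i ≤ n`) is connected. -/
def AlwaysConnected {n : ℕ} (G : SimpleGraph (Fin n)) : Prop :=
  ∀ i : ℕ, 1 ≤ i → i ≤ n → (G.induce {v : Fin n | v.val < i}).Connected

/-- `D 1 ⊆ D 2 ⊆ ⋯ ⊆ D n` is a chain in which each `D i` is a subset of
`{v_1, …, v_i}` that is a dominating set of the prefix graph `G_i`. -/
def IncDomChain {n : ℕ} (G : SimpleGraph (Fin n)) (D : ℕ → Finset (Fin n)) : Prop :=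
  (∀ i : ℕ, 1 ≤ i → i < n → D i ⊆ D (i + 1)) ∧
  (∀ i : ℕ, 1 ≤ i → i ≤ n → (∀ v ∈ D i, v.val < i) ∧ PrefixDom G i (D i))

/-- `R` is an incremental dominating set of `G`: the final set `D n` of some
incremental dominating chain. -/
def IsIncDomSet {n : ℕ} (G : SimpleGraph (Fin n)) (R : Finset (Fin n)) : Prop :=
  ∃ D : ℕ → Finset (Fin n), IncDomChain G D ∧ R = D n

/-- An incremental connected dominating chain: additionally, each `D i`
induces a connected subgraph. -/
def IncConnDomChain {n : ℕ} (G : SimpleGraph (Fin n)) (D : ℕ → Finset (Fin n)) : Prop :=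
  IncDomChain G D ∧
    ∀ i : ℕ, 1 ≤ i → i ≤ n → (G.induce (↑(D i) : Set (Fin n))).Connected

/-- `R` is an incremental connected dominating set of `G`. -/
def IsIncConnDomSet {n : ℕ} (G : SimpleGraph (Fin n)) (R : Finset (Fin n)) : Prop :=
  ∃ D : ℕ → Finset (Fin n), IncConnDomChain G D ∧ R = D n

namespace SimpleGraph

variable {V : Type*} {G : SimpleGraph V}

lemma IsAcyclic.exists_adj_mem_support_of_ne (hG : G.IsAcyclic) {w v : V} (hwv : w ≠ v)
    (p q : G.Walk w v) : ∃ x, G.Adj x v ∧ x ∈ p.support ∧ x ∈ q.support := by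
  classical
  have hpq : p.bypass = q.bypass := congrArg Subtype.val <|
    (hG.subsingleton_path w v).elim ⟨_, p.bypass_isPath⟩ ⟨_, q.bypass_isPath⟩
  refine ⟨p.bypass.penultimate, p.bypass.adj_penultimate (Walk.not_nil_of_ne hwv),
    p.support_bypass_subset_support (p.bypass.getVert_mem_support _), ?_⟩
  rw [hpq]
  exact q.support_bypass_subset_support (q.bypass.getVert_mem_support _)

lemma exists_walk_support_subset_of_reachable_induce {s : Set V} {a b : s}
    (h : (G.induce s).Reachable a b) : ∃ p : G.Walk a b, ∀ x ∈ p.support, x ∈ s := by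
  obtain ⟨q⟩ := h
  induction q with
  | nil => exact ⟨.nil, by simp⟩
  | cons hadj _ ih =>
    obtain ⟨p, hp⟩ := ih
    exact ⟨.cons (induce_adj.mp hadj) p, by simp_all⟩

end SimpleGraph

open SimpleGraph

section Anchor

variable {V : Type*} {G : SimpleGraph V} {S : Finset V}

variable (G S) in
def componentClosedNbhd (c : (G.induce (S : Set V)).ConnectedComponent) : Set V :=
  {v | ∃ u, (G.induce (S : Set V)).connectedComponentMk u = c ∧ (u.1 = v ∨ G.Adj u v)}

lemma componentClosedNbhd_nonempty (c : (G.induce (S : Set V)).ConnectedComponent) :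
    (componentClosedNbhd G S c).Nonempty := by
  obtain ⟨u, rfl⟩ := c.exists_rep
  exact ⟨u, u, rfl, Or.inl rfl⟩

lemma exists_walk_of_mem_componentClosedNbhd {u : (S : Set V)} {w v : V}
    (hw : w ∈ componentClosedNbhd G S ((G.induce (S : Set V)).connectedComponentMk u))
    (huv : G.Adj u v) : ∃ p : G.Walk w v, ∀ x ∈ p.support, x = w ∨ x = v ∨ x ∈ S := by
  obtain ⟨u', hu'u, hu'w⟩ := hw
  obtain ⟨q, hq⟩ := exists_walk_support_subset_of_reachable_induce (ConnectedComponent.exact hu'u)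
  have hr : ∀ x ∈ (q.concat huv).support, x = v ∨ x ∈ S := by
    simp only [Walk.support_concat, List.mem_append, List.mem_singleton]
    exact fun x hx => hx.elim (fun h => Or.inr (hq x h)) Or.inl
  rcases hu'w with rfl | hadj
  · exact ⟨q.concat huv, fun x hx => Or.inr (hr x hx)⟩
  · refine ⟨(q.concat huv).cons hadj.symm, fun x hx => ?_⟩
    rw [Walk.support_cons, List.mem_cons] at hx
    exact hx.elim Or.inl fun h => Or.inr (hr x h)

variable [Fintype V] [LinearOrder V]

variable (G S) in
noncomputable def componentAnchor (c : (G.induce (S : Set V)).ConnectedComponent) : V :=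
  (Set.toFinite (componentClosedNbhd G S c)).toFinset.min'
    ((Set.toFinite _).toFinset_nonempty.mpr (componentClosedNbhd_nonempty c))

lemma componentAnchor_mem (c : (G.induce (S : Set V)).ConnectedComponent) :
    componentAnchor G S c ∈ componentClosedNbhd G S c :=
  (Set.toFinite _).mem_toFinset.mp (Finset.min'_mem _ _)

lemma componentAnchor_le {c : (G.induce (S : Set V)).ConnectedComponent} {v : V}
    (hv : v ∈ componentClosedNbhd G S c) : componentAnchor G S c ≤ v :=
  Finset.min'_le _ _ ((Set.toFinite _).mem_toFinset.mpr hv)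

open Classical in
variable (G S) in
noncomputable def componentAnchors : Finset V :=
  Finset.univ.image (componentAnchor G S)

lemma componentAnchor_mem_componentAnchors (c : (G.induce (S : Set V)).ConnectedComponent) :
    componentAnchor G S c ∈ componentAnchors G S := by
  classical
  exact Finset.mem_image_of_mem _ (Finset.mem_univ c)

lemma card_componentAnchors_le : (componentAnchors G S).card ≤ numComponents G S := by
  classical
  calc (componentAnchors G S).card ≤ Fintype.card (G.induce (S : Set V)).ConnectedComponent :=
        Finset.card_image_le.trans_eq Finset.card_univ
    _ = numComponents G S := Nat.card_eq_fintype_card.symm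

theorem exists_dominator_of_isLowerSet (hG : G.IsAcyclic) (hS : IsDomSet G S) {P : Set V}
    (hP : IsLowerSet P) (hPc : (G.induce P).Preconnected) {v : V} (hv : v ∈ P) :
    ∃ u ∈ S ∪ componentAnchors G S, u ∈ P ∧ (u = v ∨ G.Adj u v) := by
  by_cases hnear : ∃ u ∈ S, u ∈ P ∧ (u = v ∨ G.Adj u v)
  · obtain ⟨u, huS, huP, huv⟩ := hnear
    exact ⟨u, Finset.mem_union_left _ huS, huP, huv⟩
  push Not at hnear
  obtain ⟨u, huS, huv⟩ : ∃ u ∈ S, G.Adj u v :=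
    (hS v).resolve_left fun hvS => (hnear v hvS hv).1 rfl
  set c := (G.induce (S : Set V)).connectedComponentMk ⟨u, huS⟩
  set a := componentAnchor G S c
  have haP : a ∈ P := hP (componentAnchor_le (c := c) ⟨⟨u, huS⟩, rfl, Or.inr huv⟩) hv
  refine ⟨a, Finset.mem_union_right _ (componentAnchor_mem_componentAnchors c), haP, ?_⟩
  by_contra! hfar
  obtain ⟨p, hp⟩ := exists_walk_of_mem_componentClosedNbhd (componentAnchor_mem c) huv
  obtain ⟨q, hq⟩ := exists_walk_support_subset_of_reachable_induce (hPc ⟨a, haP⟩ ⟨v, hv⟩)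
  obtain ⟨x, hxv, hxp, hxq⟩ := hG.exists_adj_mem_support_of_ne hfar.1 p q
  rcases hp x hxp with rfl | rfl | hxS
  · exact hfar.2 hxv
  · exact hxv.ne rfl
  · exact (hnear x hxS (hq x hxq)).2 hxv

end Anchor

lemma isIncDomSet_of_prefixDom {n : ℕ} {G : SimpleGraph (Fin n)} {R : Finset (Fin n)}
    (h : ∀ i, 1 ≤ i → i ≤ n → PrefixDom G i (R.filter (·.val < i))) : IsIncDomSet G R := by
  refine ⟨fun i => R.filter (·.val < i), ⟨fun i _ _ v hv => ?_, fun i hi hin => ?_⟩, ?_⟩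
  · obtain ⟨hvR, hvi⟩ := Finset.mem_filter.mp hv
    exact Finset.mem_filter.mpr ⟨hvR, Nat.lt_succ_of_lt hvi⟩
  · exact ⟨fun v hv => (Finset.mem_filter.mp hv).2, h i hi hin⟩
  · ext v
    simp

theorem inc_dominating_of_dominating_tree_general {n : ℕ}
    (T : SimpleGraph (Fin n)) (htree : T.Connected ∧ T.IsAcyclic)
    (hconn : AlwaysConnected T)
    (S : Finset (Fin n)) (hS : IsDomSet T S) :
    ∃ R'' : Finset (Fin n), IsIncDomSet T R'' ∧
      R''.card ≤ S.card + numComponents T S := by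
  refine ⟨S ∪ componentAnchors T S, isIncDomSet_of_prefixDom fun i hi hin v hv => ?_, ?_⟩
  · obtain ⟨u, huR, huP, rfl | huv⟩ := exists_dominator_of_isLowerSet htree.2 hS
      (P := {x | x.val < i}) (fun _ _ hba ha => lt_of_le_of_lt (Fin.le_def.mp hba) ha)
      (hconn i hi hin).preconnected hv
    · exact Or.inl (Finset.mem_filter.mpr ⟨huR, huP⟩)
    · exact Or.inr ⟨u, Finset.mem_filter.mpr ⟨huR, huP⟩, huv⟩
  · calc (S ∪ componentAnchors T S).card ≤ S.card + (componentAnchors T S).card :=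
          Finset.card_union_le _ _
      _ ≤ S.card + numComponents T S := Nat.add_le_add_left card_componentAnchors_le _

/-- If `T` is a tree presented in an always-connected order and `S`
is any dominating set of `T` whose induced subgraph has `c(S)` components, then `T`
has an incremental dominating set `R''` with `|R''| ≤ |S| + c(S)`. -/
theorem inc_dominating_of_dominating_tree {n : ℕ} (hn : 1 ≤ n)
    (T : SimpleGraph (Fin n)) (htree : T.Connected ∧ T.IsAcyclic)
    (hconn : AlwaysConnected T)
    (S : Finset (Fin n)) (hS : IsDomSet T S) :
    ∃ R'' : Finset (Fin n), IsIncDomSet T R'' ∧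
      R''.card ≤ S.card + numComponents T S :=
  inc_dominating_of_dominating_tree_general T htree hconn S hS
end

section
/- Let T be a tree with vertices listed in an order v_1, …, v_n such that every prefix graph T_i is connected. Then T has an incremental dominating set of size at most 2·γ(T), where γ(T) is the minimum size of a dominating set of T. -/
/-! In an always-connected order of a tree every vertex other than `v_1` has exactly one earlier
neighbour, its parent in the tree rooted at `v_1`: two earlier neighbours of `s` would be joined
by a path inside the connected prefix before `s`, closing a cycle through `s`. Take a minimum
dominating set `S` and add the parents of its vertices; this at most doubles `|S|`. The traces of
the resulting set on the prefixes form an incremental chain, because a vertex `v` of `T_i`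
dominated only by a later `s ∈ S` is the parent of `s`. -/

namespace SimpleGraph

theorem IsAcyclic.eq_of_adj_of_walk_notMem_support {V : Type*} {G : SimpleGraph V}
    (hG : G.IsAcyclic) {u w s : V} (hu : G.Adj u s) (hw : G.Adj w s) (p : G.Walk u w)
    (hs : s ∉ p.support) : u = w := by
  have hbridge := isBridge_iff_forall_walk_mem_edges.mp
    (isAcyclic_iff_forall_adj_isBridge.mp hG hu) (p.concat hw)
  rw [Walk.edges_concat, List.concat_eq_append, List.mem_append,
    List.mem_singleton] at hbridge
  rcases hbridge with hmem | heq
  · exact absurd (p.snd_mem_support_of_mem_edges hmem) hs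
  · exact Sym2.congr_left.mp heq

end SimpleGraph

theorem Finset.card_union_image_le_two_mul {α : Type*} [DecidableEq α] (s : Finset α)
    (f : α → α) : (s ∪ s.image f).card ≤ 2 * s.card := by
  grw [Finset.card_union_le, Finset.card_image_le, two_mul]

theorem exists_isDomSet_forall_card_le {V : Type*} [Finite V] (G : SimpleGraph V) :
    ∃ S : Finset V, IsDomSet G S ∧ ∀ S' : Finset V, IsDomSet G S' → S.card ≤ S'.card := by
  have : Fintype V := Fintype.ofFinite V
  exact Set.exists_min_image {S : Finset V | IsDomSet G S} Finset.card
    (Set.toFinite _) ⟨Finset.univ, fun v => Or.inl (Finset.mem_univ v)⟩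

section EarlierNeighbor

variable {n : ℕ} {G : SimpleGraph (Fin n)}

noncomputable def earlierNeighbor (G : SimpleGraph (Fin n)) (s : Fin n) : Fin n :=
  open Classical in if h : ∃ u, G.Adj u s ∧ u < s then h.choose else s

theorem earlierNeighbor_spec {s : Fin n} (h : ∃ u, G.Adj u s ∧ u < s) :
    G.Adj (earlierNeighbor G s) s ∧ earlierNeighbor G s < s := by
  rw [earlierNeighbor, dif_pos h]
  exact h.choose_spec

theorem AlwaysConnected.eq_of_adj_of_lt (hconn : AlwaysConnected G) (hac : G.IsAcyclic)
    {u w s : Fin n} (hu : G.Adj u s) (hus : u < s) (hw : G.Adj w s) (hws : w < s) : u = w := by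
  obtain ⟨p⟩ := (hconn s.val (by omega) s.isLt.le).preconnected
    (⟨u, hus⟩ : {v : Fin n | v.val < s.val}) ⟨w, hws⟩
  have hs : s ∉ (p.map (SimpleGraph.Embedding.induce _).toHom).support := by
    simp only [SimpleGraph.Walk.support_map, List.mem_map, not_exists, not_and]
    exact fun x _ hxs => Fin.ne_of_lt x.2 hxs
  exact hac.eq_of_adj_of_walk_notMem_support hu hw _ hs

theorem AlwaysConnected.earlierNeighbor_eq (hconn : AlwaysConnected G) (hac : G.IsAcyclic)
    {v s : Fin n} (hv : G.Adj v s) (hvs : v < s) : earlierNeighbor G s = v :=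
  have hspec := earlierNeighbor_spec ⟨v, hv, hvs⟩
  hconn.eq_of_adj_of_lt hac hspec.1 hspec.2 hv hvs

theorem isIncDomSet_of_forall_prefixDom (B : Finset (Fin n))
    (hB : ∀ i, 1 ≤ i → i ≤ n → PrefixDom G i (B.filter (·.val < i))) : IsIncDomSet G B := by
  refine ⟨fun i => B.filter (·.val < i), ⟨fun i _ _ => ?_, fun i hi hin => ⟨?_, hB i hi hin⟩⟩, ?_⟩
  · exact Finset.monotone_filter_right B fun _ _ h => Nat.lt_succ_of_lt h
  · exact fun v hv => (Finset.mem_filter.mp hv).2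
  · exact (Finset.filter_true_of_mem fun v _ => v.isLt).symm

theorem AlwaysConnected.prefixDom_filter_union_image_earlierNeighbor
    (hconn : AlwaysConnected G) (hac : G.IsAcyclic) {S : Finset (Fin n)} (hS : IsDomSet G S)
    (i : ℕ) : PrefixDom G i ((S ∪ S.image (earlierNeighbor G)).filter (·.val < i)) := by
  intro v hvi
  simp only [Finset.mem_filter, Finset.mem_union, Finset.mem_image]
  rcases hS v with hvS | ⟨s, hsS, hsv⟩
  · exact Or.inl ⟨Or.inl hvS, hvi⟩
  by_cases hsi : s.val < i
  · exact Or.inr ⟨s, ⟨Or.inl hsS, hsi⟩, hsv⟩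
  · exact Or.inl ⟨Or.inr ⟨s, hsS, hconn.earlierNeighbor_eq hac hsv.symm (by omega)⟩, hvi⟩

end EarlierNeighbor

theorem inc_dominating_le_two_gamma_tree_general {n : ℕ}
    (T : SimpleGraph (Fin n)) (htree : T.Connected ∧ T.IsAcyclic)
    (hconn : AlwaysConnected T) :
    ∃ R : Finset (Fin n), IsIncDomSet T R ∧
      ∀ S : Finset (Fin n), IsDomSet T S → R.card ≤ 2 * S.card := by
  obtain ⟨S₀, hS₀, hmin⟩ := exists_isDomSet_forall_card_le T
  refine ⟨S₀ ∪ S₀.image (earlierNeighbor T), isIncDomSet_of_forall_prefixDom _ fun i _ _ =>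
    hconn.prefixDom_filter_union_image_earlierNeighbor htree.2 hS₀ i, fun S hS => ?_⟩
  calc (S₀ ∪ S₀.image (earlierNeighbor T)).card ≤ 2 * S₀.card :=
        Finset.card_union_image_le_two_mul S₀ _
    _ ≤ 2 * S.card := Nat.mul_le_mul_left 2 (hmin S hS)

/-- If `T` is a tree presented in an always-connected order, then `T`
has an incremental dominating set of size at most `2·γ(T)`, i.e. an incremental
dominating set `R` with `|R| ≤ 2·|S|` for every dominating set `S` of `T`. -/
theorem inc_dominating_le_two_gamma_tree {n : ℕ} (hn : 1 ≤ n)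
    (T : SimpleGraph (Fin n)) (htree : T.Connected ∧ T.IsAcyclic)
    (hconn : AlwaysConnected T) :
    ∃ R : Finset (Fin n), IsIncDomSet T R ∧
      ∀ S : Finset (Fin n), IsDomSet T S → R.card ≤ 2 * S.card :=
  inc_dominating_le_two_gamma_tree_general T htree hconn
end

section
/- For any graph G with vertices listed in an order v_1, …, v_n, there is exactly one chain D_1 ⊆ D_2 ⊆ ⋯ ⊆ D_n in which each D_i is a subset of {v_1, …, v_i} that is an independent dominating set of G_i; that is, G has a unique incremental independent dominating set chain. -/
/-- `D 1 ⊆ ⋯ ⊆ D n` is a chain in which each `D i ⊆ {v_1, …, v_i}` is an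
independent dominating set of the prefix graph `G_i`. -/
def IncIndDomChain {n : ℕ} (G : SimpleGraph (Fin n)) (D : ℕ → Finset (Fin n)) : Prop :=
  (∀ i : ℕ, 1 ≤ i → i < n → D i ⊆ D (i + 1)) ∧
  (∀ i : ℕ, 1 ≤ i → i ≤ n → (∀ v ∈ D i, v.val < i) ∧ PrefixDom G i (D i) ∧
    ∀ u ∈ D i, ∀ v ∈ D i, ¬ G.Adj u v)

/-!
Scanning `v_1, …, v_n` in order, the chain is forced: `D_{i+1}` restricted to `G_i` must
already be `D_i`, since any further vertex of `G_i` is dominated by `D_i ⊆ D_{i+1}` and would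
break independence; and `v_{i+1}` belongs to `D_{i+1}` exactly when it has no neighbour in `D_i`.
Read as a greedy construction, the same rule produces a chain.
-/

section AddIfUndominated

variable {V : Type*} [DecidableEq V] (G : SimpleGraph V) (D : Finset V) (v : V)

open Classical in
noncomputable def addIfUndominated : Finset V :=
  if ∃ u ∈ D, G.Adj u v then D else insert v D

variable {G D v}

theorem addIfUndominated_of_adj (h : ∃ u ∈ D, G.Adj u v) : addIfUndominated G D v = D :=
  if_pos h

theorem addIfUndominated_of_not_adj (h : ¬∃ u ∈ D, G.Adj u v) :
    addIfUndominated G D v = insert v D :=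
  if_neg h

theorem subset_addIfUndominated : D ⊆ addIfUndominated G D v := by
  by_cases h : ∃ u ∈ D, G.Adj u v
  · rw [addIfUndominated_of_adj h]
  · rw [addIfUndominated_of_not_adj h]
    exact Finset.subset_insert v D

end AddIfUndominated

section PrefixGraph

variable {n : ℕ} (G : SimpleGraph (Fin n))

def IsPrefixIndDom (i : ℕ) (D : Finset (Fin n)) : Prop :=
  (∀ v ∈ D, v.val < i) ∧ PrefixDom G i D ∧ ∀ u ∈ D, ∀ v ∈ D, ¬ G.Adj u v

variable {G}

theorem Fin.val_lt_or_eq_of_val_lt_succ {i : ℕ} (hi : i < n) {v : Fin n} (hv : v.val < i + 1) :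
    v.val < i ∨ v = ⟨i, hi⟩ :=
  (Nat.lt_succ_iff_lt_or_eq.mp hv).imp_right Fin.ext

theorem isPrefixIndDom_empty : IsPrefixIndDom G 0 ∅ := by
  simp [IsPrefixIndDom, PrefixDom]

theorem IsPrefixIndDom.succ_addIfUndominated {i : ℕ} {D : Finset (Fin n)}
    (hD : IsPrefixIndDom G i D) (hi : i < n) :
    IsPrefixIndDom G (i + 1) (addIfUndominated G D ⟨i, hi⟩) := by
  obtain ⟨hlt, hdom, hind⟩ := hD
  by_cases hadj : ∃ u ∈ D, G.Adj u ⟨i, hi⟩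
  · rw [addIfUndominated_of_adj hadj]
    refine ⟨fun v hv => (hlt v hv).trans (Nat.lt_succ_self i), fun v hv => ?_, hind⟩
    rcases Fin.val_lt_or_eq_of_val_lt_succ hi hv with hv | rfl
    · exact hdom v hv
    · exact Or.inr hadj
  · rw [addIfUndominated_of_not_adj hadj]
    push Not at hadj
    refine ⟨?_, fun v hv => ?_, ?_⟩
    · simp only [Finset.mem_insert, forall_eq_or_imp]
      exact ⟨Nat.lt_succ_self i, fun v hv => (hlt v hv).trans (Nat.lt_succ_self i)⟩
    · rcases Fin.val_lt_or_eq_of_val_lt_succ hi hv with hv | rfl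
      · rcases hdom v hv with hvD | ⟨u, hu, huv⟩
        · exact Or.inl (Finset.mem_insert_of_mem hvD)
        · exact Or.inr ⟨u, Finset.mem_insert_of_mem hu, huv⟩
      · exact Or.inl (Finset.mem_insert_self _ _)
    · simp only [Finset.mem_insert]
      rintro u (rfl | hu) w (rfl | hw) huw
      · exact G.irrefl huw
      · exact hadj w hw huw.symm
      · exact hadj u hu huw
      · exact hind u hu w hw huw

theorem IsPrefixIndDom.eq_addIfUndominated {i : ℕ} {D D' : Finset (Fin n)}
    (hD : IsPrefixIndDom G i D) (hD' : IsPrefixIndDom G (i + 1) D') (hsub : D ⊆ D')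
    (hi : i < n) : D' = addIfUndominated G D ⟨i, hi⟩ := by
  obtain ⟨-, hdom, -⟩ := hD
  obtain ⟨hlt', hdom', hind'⟩ := hD'
  have hrestrict : ∀ x ∈ D', x.val < i → x ∈ D := fun x hx hxi =>
    (hdom x hxi).resolve_right fun ⟨u, hu, hux⟩ => hind' u (hsub hu) x hx hux
  by_cases hadj : ∃ u ∈ D, G.Adj u ⟨i, hi⟩
  · rw [addIfUndominated_of_adj hadj]
    obtain ⟨u, hu, huv⟩ := hadj
    refine subset_antisymm (fun x hx => ?_) hsub
    rcases Fin.val_lt_or_eq_of_val_lt_succ hi (hlt' x hx) with hxi | rfl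
    · exact hrestrict x hx hxi
    · exact absurd huv (hind' u (hsub hu) _ hx)
  · rw [addIfUndominated_of_not_adj hadj]
    have hmem : (⟨i, hi⟩ : Fin n) ∈ D' := by
      refine (hdom' _ (Nat.lt_succ_self i)).resolve_right fun ⟨u, hu, huv⟩ => ?_
      rcases Fin.val_lt_or_eq_of_val_lt_succ hi (hlt' u hu) with hui | rfl
      · exact hadj ⟨u, hrestrict u hu hui, huv⟩
      · exact G.irrefl huv
    refine subset_antisymm (fun x hx => ?_) (Finset.insert_subset hmem hsub)
    rcases Fin.val_lt_or_eq_of_val_lt_succ hi (hlt' x hx) with hxi | rfl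
    · exact Finset.mem_insert_of_mem (hrestrict x hx hxi)
    · exact Finset.mem_insert_self _ _

variable (G)

noncomputable def greedyIndDomChain : ℕ → Finset (Fin n)
  | 0 => ∅
  | i + 1 =>
    if hi : i < n then addIfUndominated G (greedyIndDomChain i) ⟨i, hi⟩ else greedyIndDomChain i

theorem greedyIndDomChain_succ {i : ℕ} (hi : i < n) :
    greedyIndDomChain G (i + 1) = addIfUndominated G (greedyIndDomChain G i) ⟨i, hi⟩ :=
  dif_pos hi

theorem greedyIndDomChain_subset_succ (i : ℕ) :
    greedyIndDomChain G i ⊆ greedyIndDomChain G (i + 1) := by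
  by_cases hi : i < n
  · rw [greedyIndDomChain_succ G hi]
    exact subset_addIfUndominated
  · rw [greedyIndDomChain, dif_neg hi]

theorem isPrefixIndDom_greedyIndDomChain {i : ℕ} (hi : i ≤ n) :
    IsPrefixIndDom G i (greedyIndDomChain G i) := by
  induction i with
  | zero => exact isPrefixIndDom_empty
  | succ i ih =>
    rw [greedyIndDomChain_succ G hi]
    exact (ih (by omega)).succ_addIfUndominated hi

theorem incIndDomChain_greedyIndDomChain : IncIndDomChain G (greedyIndDomChain G) :=
  ⟨fun i _ _ => greedyIndDomChain_subset_succ G i,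
    fun _ _ hi => isPrefixIndDom_greedyIndDomChain G hi⟩

variable {G}

theorem IncIndDomChain.isPrefixIndDom {D : ℕ → Finset (Fin n)} (hD : IncIndDomChain G D)
    {i : ℕ} (h1 : 1 ≤ i) (hi : i ≤ n) : IsPrefixIndDom G i (D i) :=
  hD.2 i h1 hi

theorem IncIndDomChain.eq_greedyIndDomChain {D : ℕ → Finset (Fin n)} (hD : IncIndDomChain G D)
    {i : ℕ} (hi : i < n) : D (i + 1) = greedyIndDomChain G (i + 1) := by
  induction i with
  | zero =>
    rw [greedyIndDomChain_succ G hi]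
    exact isPrefixIndDom_empty.eq_addIfUndominated (hD.isPrefixIndDom le_rfl hi)
      (Finset.empty_subset _) hi
  | succ i ih =>
    rw [greedyIndDomChain_succ G hi, ← ih (by omega)]
    exact (hD.isPrefixIndDom (by omega) (by omega)).eq_addIfUndominated
      (hD.isPrefixIndDom (by omega) hi) (hD.1 (i + 1) (by omega) hi) hi

end PrefixGraph

/-- For any graph `G` with vertices listed in an order
`v_1, …, v_n`, there is exactly one chain `D_1 ⊆ ⋯ ⊆ D_n` in which each `D_i` is a
subset of `{v_1, …, v_i}` that is an independent dominating set of `G_i`. -/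
theorem unique_inc_independent_dominating_chain {n : ℕ} (G : SimpleGraph (Fin n)) :
    (∃ D : ℕ → Finset (Fin n), IncIndDomChain G D) ∧
    ∀ D D' : ℕ → Finset (Fin n), IncIndDomChain G D → IncIndDomChain G D' →
      ∀ i : ℕ, 1 ≤ i → i ≤ n → D i = D' i := by
  refine ⟨⟨greedyIndDomChain G, incIndDomChain_greedyIndDomChain G⟩,
    fun D D' hD hD' i h1 hi => ?_⟩
  obtain ⟨k, rfl⟩ := Nat.exists_eq_add_of_le' h1
  rw [hD.eq_greedyIndDomChain hi, hD'.eq_greedyIndDomChain hi]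
end

section
/- Let G be a graph with vertices listed in an order v_1, …, v_n such that every prefix graph G_i is connected, and let D_1 ⊆ D_2 ⊆ ⋯ ⊆ D_n be a chain in which each D_i ⊆ {v_1, …, v_i} is a total dominating set of G_i. Then for every i, the subgraph induced by D_i is connected (or D_i is empty). -/
/-- `D` is a total dominating set of the prefix graph `G_i`: every vertex of
`G_i` that is non-isolated in `G_i` has a neighbor in `D`. -/
def PrefixTotalDom {n : ℕ} (G : SimpleGraph (Fin n)) (i : ℕ) (D : Finset (Fin n)) : Prop :=
  ∀ v : Fin n, v.val < i → (∃ u : Fin n, u.val < i ∧ G.Adj u v) →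
    ∃ u ∈ D, G.Adj u v

/-- `D 1 ⊆ ⋯ ⊆ D n` is a chain in which each `D i ⊆ {v_1, …, v_i}` is a total
dominating set of the prefix graph `G_i`. -/
def IncTotalDomChain {n : ℕ} (G : SimpleGraph (Fin n)) (D : ℕ → Finset (Fin n)) : Prop :=
  (∀ i : ℕ, 1 ≤ i → i < n → D i ⊆ D (i + 1)) ∧
  (∀ i : ℕ, 1 ≤ i → i ≤ n → (∀ v ∈ D i, v.val < i) ∧ PrefixTotalDom G i (D i))

open SimpleGraph in
/-- In a connected prefix with at least two vertices, every vertex of the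
prefix has a neighbor inside the prefix. -/
lemma prefix_nonisolated {n : ℕ} (G : SimpleGraph (Fin n))
    (hconn : AlwaysConnected G) {k : ℕ} (hk2 : 2 ≤ k) (hkn : k ≤ n)
    {v : Fin n} (hv : v.val < k) : ∃ u : Fin n, u.val < k ∧ G.Adj u v := by
  have hc := hconn k (by omega) hkn
  have h0 : (0 : ℕ) < n := by omega
  have h1 : (1 : ℕ) < n := by omega
  set y : Fin n := if v = ⟨0, h0⟩ then ⟨1, h1⟩ else ⟨0, h0⟩ with hy
  have hyk : y.val < k := by
    rw [hy]; split <;> simp <;> omega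
  have hne : v ≠ y := by
    rw [hy]; split
    · rename_i h; rw [h]; simp [Fin.ext_iff]
    · rename_i h; exact h
  obtain ⟨w⟩ := hc.preconnected ⟨v, hv⟩ ⟨y, hyk⟩
  have hnn : ¬ w.Nil := Walk.not_nil_of_ne (by simp [Subtype.ext_iff, hne])
  have hadj := Walk.adj_snd hnn
  refine ⟨(w.getVert 1 : {x : Fin n | x.val < k}).val, (w.getVert 1).property, ?_⟩
  exact (hadj : G.Adj v _).symm

open SimpleGraph in
lemma key_reach {n : ℕ} (G : SimpleGraph (Fin n))
    (hconn : AlwaysConnected G) (D : ℕ → Finset (Fin n))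
    (hD : IncTotalDomChain G D) :
    ∀ i : ℕ, 1 ≤ i → i ≤ n → ∀ x (hx : x ∈ (↑(D i) : Set (Fin n)))
      y (hy : y ∈ (↑(D i) : Set (Fin n))),
      (G.induce (↑(D i) : Set (Fin n))).Reachable ⟨x, hx⟩ ⟨y, hy⟩ := by
  obtain ⟨hmono, hdom⟩ := hD
  intro i hi1
  induction i, hi1 using Nat.le_induction with
  | base =>
    intro hn x hx y hy
    have hx1 : x.val < 1 := (hdom 1 le_rfl hn).1 x (by exact_mod_cast hx)
    have hy1 : y.val < 1 := (hdom 1 le_rfl hn).1 y (by exact_mod_cast hy)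
    have hxy : x = y := Fin.ext (by omega)
    subst hxy
    exact Reachable.refl _
  | succ i hi ih =>
    intro hn
    by_cases hDi : (D i) = ∅
    · -- then i = 1
      have hieq : i = 1 := by
        by_contra h
        have hi2 : 2 ≤ i := by omega
        obtain ⟨u, hu, hadj⟩ := prefix_nonisolated G hconn hi2 (by omega)
          (v := ⟨0, by omega⟩) (by show (0:ℕ) < i; omega)
        obtain ⟨d, hd, _⟩ := (hdom i (by omega) (by omega)).2 ⟨0, by omega⟩
          (by show (0:ℕ) < i; omega)
          ⟨u, hu, hadj⟩
        simp [hDi] at hd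
      subst hieq
      intro x hx y hy
      by_cases hxy : x = y
      · subst hxy; exact Reachable.refl _
      · have hx2 : x.val < 2 := (hdom 2 (by omega) hn).1 x (by exact_mod_cast hx)
        have hy2 : y.val < 2 := (hdom 2 (by omega) hn).1 y (by exact_mod_cast hy)
        obtain ⟨u, hu2, hadj⟩ := prefix_nonisolated G hconn le_rfl hn hx2
        obtain ⟨d, hd, hdx⟩ := (hdom 2 (by omega) hn).2 x hx2 ⟨u, hu2, hadj⟩
        have hd2 : d.val < 2 := (hdom 2 (by omega) hn).1 d hd
        have hdne : d ≠ x := fun h => by subst h; exact G.irrefl hdx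
        have hdvx : d.val ≠ x.val := fun h => hdne (Fin.ext h)
        have hxvy : x.val ≠ y.val := fun h => hxy (Fin.ext h)
        have hdy : d = y := Fin.ext (by omega)
        subst hdy
        exact (Adj.reachable (show (G.induce (↑(D 2) : Set (Fin n))).Adj ⟨d, hy⟩ ⟨x, hx⟩
          from hdx)).symm
    · obtain ⟨s, hs⟩ := Finset.nonempty_iff_ne_empty.mpr hDi
      have hsub : D i ⊆ D (i + 1) := hmono i hi (by omega)
      have hssub : (↑(D i) : Set (Fin n)) ⊆ ↑(D (i + 1)) := Finset.coe_subset.mpr hsub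
      have hsmem : s ∈ (↑(D (i + 1)) : Set (Fin n)) := hssub (by exact_mod_cast hs)
      have sub : ∀ w (hw : w ∈ (↑(D (i + 1)) : Set (Fin n))), w.val < i →
          (G.induce (↑(D (i + 1)) : Set (Fin n))).Reachable ⟨w, hw⟩ ⟨s, hsmem⟩ := by
        intro w hw hwi
        rcases Nat.lt_or_ge i 2 with hilt | hi2
        · have hs1 : s.val < i := (hdom i hi (by omega)).1 s hs
          have hws : w = s := Fin.ext (by omega)
          subst hws
          exact Reachable.refl _
        · obtain ⟨u, hui, huadj⟩ := prefix_nonisolated G hconn hi2 (by omega) hwi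
          obtain ⟨d, hd, hdadj⟩ := (hdom i hi (by omega)).2 w hwi ⟨u, hui, huadj⟩
          have hdmem : d ∈ (↑(D i) : Set (Fin n)) := by exact_mod_cast hd
          have hsmem' : s ∈ (↑(D i) : Set (Fin n)) := by exact_mod_cast hs
          have hreach := ih (by omega) d hdmem s hsmem'
          have hmap := hreach.map (G.induceHomOfLE hssub).toHom
          have hstep : (G.induce (↑(D (i + 1)) : Set (Fin n))).Adj ⟨w, hw⟩
              ⟨d, hssub hdmem⟩ := hdadj.symm
          exact (hstep.reachable).trans hmap
      have main : ∀ w (hw : w ∈ (↑(D (i + 1)) : Set (Fin n))),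
          (G.induce (↑(D (i + 1)) : Set (Fin n))).Reachable ⟨w, hw⟩ ⟨s, hsmem⟩ := by
        intro w hw
        have hwlt : w.val < i + 1 := (hdom (i+1) (by omega) hn).1 w (by exact_mod_cast hw)
        rcases Nat.lt_or_ge w.val i with hwi | hwi
        · exact sub w hw hwi
        · -- w.val = i
          obtain ⟨u, hui, huadj⟩ := prefix_nonisolated G hconn (by omega) hn hwlt
          obtain ⟨d, hd, hdadj⟩ := (hdom (i+1) (by omega) hn).2 w hwlt ⟨u, hui, huadj⟩
          have hdmem : d ∈ (↑(D (i+1)) : Set (Fin n)) := by exact_mod_cast hd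
          have hdlt : d.val < i + 1 := (hdom (i+1) (by omega) hn).1 d hd
          have hdne : d ≠ w := fun h => by subst h; exact G.irrefl hdadj
          have hdi : d.val < i := by
            rcases Nat.lt_or_ge d.val i with h | h
            · exact h
            · exact absurd (Fin.ext (by omega : d.val = w.val)) hdne
          have hstep : (G.induce (↑(D (i + 1)) : Set (Fin n))).Adj ⟨w, hw⟩
              ⟨d, hdmem⟩ := hdadj.symm
          exact hstep.reachable.trans (sub d hdmem hdi)
      intro x hx y hy
      exact (main x hx).trans (main y hy).symm

/-- If `G` is presented in an always-connected order and
`D_1 ⊆ ⋯ ⊆ D_n` is a chain in which each `D_i ⊆ {v_1, …, v_i}` is a total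
dominating set of `G_i`, then every `D_i` is empty or induces a connected
subgraph. -/
theorem inc_total_dominating_chain_connected {n : ℕ} (G : SimpleGraph (Fin n))
    (hconn : AlwaysConnected G) (D : ℕ → Finset (Fin n))
    (hD : IncTotalDomChain G D) :
    ∀ i : ℕ, 1 ≤ i → i ≤ n →
      D i = ∅ ∨ (G.induce (↑(D i) : Set (Fin n))).Connected := by
  intro i hi1 hin
  by_cases h : D i = ∅
  · exact Or.inl h
  · right
    obtain ⟨v0, hv0⟩ := Finset.nonempty_iff_ne_empty.mpr h
    have hv0' : v0 ∈ (↑(D i) : Set (Fin n)) := by exact_mod_cast hv0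
    rw [SimpleGraph.connected_iff_exists_forall_reachable]
    exact ⟨⟨v0, hv0'⟩, fun w =>
      (key_reach G hconn D hD i hi1 hin w.val w.property v0 hv0').symm⟩
end

section
/- Let T be a tree on n ≥ 2 vertices listed in an order v_1, …, v_n such that every prefix graph T_i is connected. The minimum size of an incremental connected dominating set of T equals int(T) + 1 if v_1 is a leaf of T, and equals int(T) otherwise, where int(T) is the number of internal vertices of T. -/
/-!
Every vertex other than `v_1` has an earlier neighbour, because its prefix is connected. Hence
`v_1` together with the internal vertices of `v_1, …, v_i` dominates `T_i`: the earlier neighbour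
of a later vertex is `v_1` or has neighbours on both sides. These sets are connected, since every
path between two of them passes only through internal vertices, so they form an incremental
connected dominating chain. Conversely, `v_1` lies in `D_1`, and in a tree a connected dominating
set misses no vertex of degree at least two, whose removal would disconnect two of its neighbours.
-/
namespace SimpleGraph

variable {V : Type*} {G : SimpleGraph V}

lemma two_le_degree_iff {x : V} [Fintype (G.neighborSet x)] :
    2 ≤ G.degree x ↔ ∃ a b, a ≠ b ∧ G.Adj x a ∧ G.Adj x b := by
  classical
  rw [← card_neighborFinset_eq_degree, Nat.succ_le_iff, Finset.one_lt_card_iff]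
  simp only [mem_neighborFinset]
  grind

lemma Walk.IsPath.exists_adj_adj_ne_of_mem_support {u v x : V} {p : G.Walk u v}
    (hp : p.IsPath) (hx : x ∈ p.support) (hxu : x ≠ u) (hxv : x ≠ v) :
    ∃ a b, a ≠ b ∧ G.Adj x a ∧ G.Adj x b := by
  induction p with
  | nil => simp_all
  | @cons u c v huc q ih =>
    rw [Walk.cons_isPath_iff] at hp
    rw [Walk.support_cons, List.mem_cons] at hx
    obtain rfl | hx := hx
    · exact absurd rfl hxu
    by_cases hxc : x = c
    · subst hxc
      have hq : ¬ q.Nil := Walk.not_nil_of_ne hxv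
      refine ⟨u, q.snd, ?_, huc.symm, q.adj_snd hq⟩
      rintro rfl
      exact hp.2 (List.mem_of_mem_tail (q.snd_mem_tail_support hq))
    · exact ih hp.1 hx hxc hxv

lemma exists_walk_support_subset_of_preconnected_induce {s : Set V}
    (hs : (G.induce s).Preconnected) {a b : V} (ha : a ∈ s) (hb : b ∈ s) :
    ∃ p : G.Walk a b, ∀ x ∈ p.support, x ∈ s := by
  obtain ⟨q⟩ := hs ⟨a, ha⟩ ⟨b, hb⟩
  refine ⟨q.map (Embedding.induce s).toHom, fun x hx => ?_⟩
  obtain ⟨y, -, rfl⟩ := List.mem_map.mp ((Walk.support_map _ q).subst hx :)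
  exact y.2

lemma connected_induce_of_two_le_degree_mem [G.LocallyFinite] {s t : Set V}
    (hs : (G.induce s).Connected) (hts : t ⊆ s) (ht : t.Nonempty)
    (hint : ∀ x ∈ s, 2 ≤ G.degree x → x ∈ t) : (G.induce t).Connected := by
  classical
  obtain ⟨r, hr⟩ := ht
  refine induce_connected_of_patches r hr fun {y} hy => ?_
  obtain ⟨p, hps⟩ :=
    exists_walk_support_subset_of_preconnected_induce hs.preconnected (hts hr) (hts hy)
  have hsupp : {x | x ∈ p.bypass.support} ⊆ t := by
    intro x hx
    by_cases hxr : x = r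
    · exact hxr ▸ hr
    by_cases hxy : x = y
    · exact hxy ▸ hy
    exact hint x (hps x (p.support_bypass_subset_support hx)) (two_le_degree_iff.mpr
      (p.bypass_isPath.exists_adj_adj_ne_of_mem_support hx hxr hxy))
  exact ⟨_, hsupp, p.bypass.start_mem_support, p.bypass.end_mem_support,
    (p.bypass.connected_induce_support).preconnected _ _⟩

lemma IsAcyclic.mem_support_of_adj_of_adj (hG : G.IsAcyclic) {w a b : V} (hab : a ≠ b)
    (ha : G.Adj w a) (hb : G.Adj w b) (p : G.Walk a b) : w ∈ p.support := by
  have hedge : s(w, a) ∈ (p.reverse.cons hb).edges :=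
    isBridge_iff_forall_walk_mem_edges.mp (isAcyclic_iff_forall_adj_isBridge.mp hG ha) _
  have hne : s(w, a) ≠ s(w, b) := fun h => hab (Sym2.congr_right.mp h)
  rw [Walk.edges_cons, List.mem_cons, Walk.edges_reverse, List.mem_reverse] at hedge
  exact p.fst_mem_support_of_mem_edges (hedge.resolve_left hne)

lemma IsAcyclic.two_le_degree_mem (hG : G.IsAcyclic) {s : Set V}
    (hs : (G.induce s).Connected) (hdom : ∀ v, v ∈ s ∨ ∃ u ∈ s, G.Adj u v)
    {w : V} [Fintype (G.neighborSet w)] (hw : 2 ≤ G.degree w) : w ∈ s := by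
  by_contra hws
  have hexit : ∀ c, G.Adj w c → ∃ c' ∈ s, ∃ q : G.Walk c c', w ∉ q.support := by
    intro c hc
    obtain hcs | ⟨u, hus, huc⟩ := hdom c
    · exact ⟨c, hcs, .nil, by simpa using hc.ne⟩
    · refine ⟨u, hus, .cons huc.symm .nil, ?_⟩
      simp only [Walk.support_cons, Walk.support_nil, List.mem_cons, List.not_mem_nil, or_false,
        not_or]
      exact ⟨hc.ne, fun h => hws (h ▸ hus)⟩
  obtain ⟨a, b, hab, ha, hb⟩ := two_le_degree_iff.mp hw
  obtain ⟨a', ha's, qa, hqa⟩ := hexit a ha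
  obtain ⟨b', hb's, qb, hqb⟩ := hexit b hb
  obtain ⟨qm, hqm⟩ := exists_walk_support_subset_of_preconnected_induce hs.preconnected ha's hb's
  have hmem := hG.mem_support_of_adj_of_adj hab ha hb (qa.append (qm.append qb.reverse))
  simp only [Walk.mem_support_append_iff, Walk.support_reverse, List.mem_reverse] at hmem
  exact hmem.elim hqa (Or.elim · (fun h => hws (hqm w h)) hqb)

end SimpleGraph

open SimpleGraph

section PrefixOrder

variable {n : ℕ} {G : SimpleGraph (Fin n)}

lemma AlwaysConnected.exists_adj_lt (hG : AlwaysConnected G) {v : Fin n} (hv : v.val ≠ 0) :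
    ∃ u, G.Adj v u ∧ u.val < v.val := by
  obtain ⟨p⟩ := (hG (v.val + 1) (by omega) v.isLt).preconnected
    ⟨v, Nat.lt_succ_self _⟩ ⟨⟨0, by omega⟩, Nat.succ_pos _⟩
  have hp : ¬ p.Nil := Walk.not_nil_of_ne fun h => hv (by simpa using congrArg (·.val.val) h)
  have hadj : G.Adj v p.snd := p.adj_snd hp
  exact ⟨p.snd, hadj, lt_of_le_of_ne (Nat.lt_succ_iff.mp p.snd.2) fun h => hadj.ne (Fin.ext h.symm)⟩

lemma AlwaysConnected.degree_pos (hG : AlwaysConnected G) [DecidableRel G.Adj] (hn : 1 < n) :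
    0 < G.degree ⟨0, by omega⟩ := by
  obtain ⟨u, hu, hu0⟩ := hG.exists_adj_lt (v := ⟨1, hn⟩) one_ne_zero
  have hu0 : u = ⟨0, by omega⟩ := Fin.ext (by simpa using hu0)
  exact G.degree_pos_iff_exists_adj _ |>.mpr ⟨_, hu0 ▸ hu.symm⟩

/-- `D_i = {v_1} ∪ {internal vertices among v_1, …, v_i}`, where `v_k` is the vertex of value
`k - 1`. -/
def internalChain (G : SimpleGraph (Fin n)) [DecidableRel G.Adj] (i : ℕ) : Finset (Fin n) :=
  Finset.univ.filter fun v => v.val = 0 ∨ (2 ≤ G.degree v ∧ v.val < i)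

variable [DecidableRel G.Adj]

lemma mem_internalChain {i : ℕ} {v : Fin n} :
    v ∈ internalChain G i ↔ v.val = 0 ∨ (2 ≤ G.degree v ∧ v.val < i) := by
  simp [internalChain]

lemma AlwaysConnected.prefixDom_internalChain (hG : AlwaysConnected G) (i : ℕ) :
    PrefixDom G i (internalChain G i) := by
  intro v hvi
  by_cases hv0 : v.val = 0
  · exact Or.inl (mem_internalChain.mpr (Or.inl hv0))
  obtain ⟨u, hvu, huv⟩ := hG.exists_adj_lt hv0
  refine Or.inr ⟨u, mem_internalChain.mpr ?_, hvu.symm⟩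
  by_cases hu0 : u.val = 0
  · exact Or.inl hu0
  obtain ⟨u', huu', hu'u⟩ := hG.exists_adj_lt hu0
  have hne : u' ≠ v := fun h => by omega
  exact Or.inr ⟨two_le_degree_iff.mpr ⟨u', v, hne, huu', hvu.symm⟩, by omega⟩

lemma AlwaysConnected.connected_induce_internalChain (hG : AlwaysConnected G) {i : ℕ}
    (hi : 1 ≤ i) (hin : i ≤ n) : (G.induce (internalChain G i : Set (Fin n))).Connected := by
  refine connected_induce_of_two_le_degree_mem (hG i hi hin) (fun v hv => ?_)
    ⟨⟨0, by omega⟩, mem_internalChain.mpr (Or.inl rfl)⟩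
    fun x hx hx2 => mem_internalChain.mpr (Or.inr ⟨hx2, hx⟩)
  obtain h | ⟨-, h⟩ := mem_internalChain.mp hv
  · show v.val < i
    omega
  · exact h

lemma AlwaysConnected.incConnDomChain_internalChain (hG : AlwaysConnected G) :
    IncConnDomChain G (internalChain G) := by
  refine ⟨⟨fun i _ _ v hv => ?_, fun i hi _ => ⟨fun v hv => ?_, hG.prefixDom_internalChain i⟩⟩,
    fun i hi hin => hG.connected_induce_internalChain hi hin⟩
  · simp only [mem_internalChain] at hv ⊢
    omega
  · obtain h | ⟨-, h⟩ := mem_internalChain.mp hv <;> omega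

lemma internalChain_self :
    internalChain G n = Finset.univ.filter fun v => v.val = 0 ∨ 2 ≤ G.degree v := by
  ext v
  simp [mem_internalChain, v.isLt]

lemma card_filter_val_eq_zero_or_two_le_degree (h0 : 0 < n) (hdeg : 0 < G.degree ⟨0, h0⟩) :
    (Finset.univ.filter fun v : Fin n => v.val = 0 ∨ 2 ≤ G.degree v).card =
      if G.degree ⟨0, h0⟩ = 1 then (Finset.univ.filter fun v => 2 ≤ G.degree v).card + 1
      else (Finset.univ.filter fun v => 2 ≤ G.degree v).card := by
  have hinsert : (Finset.univ.filter fun v : Fin n => v.val = 0 ∨ 2 ≤ G.degree v) =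
      insert ⟨0, h0⟩ (Finset.univ.filter fun v => 2 ≤ G.degree v) := by
    ext v
    simp [Fin.ext_iff]
  rw [hinsert]
  split_ifs with h1
  · exact Finset.card_insert_of_notMem (by simp [h1])
  · exact congrArg Finset.card (Finset.insert_eq_of_mem (by simp; omega))

end PrefixOrder

section LowerBound

variable {n : ℕ} {G : SimpleGraph (Fin n)} {D : ℕ → Finset (Fin n)}

lemma IncDomChain.mono (hD : IncDomChain G D) {i j : ℕ} (hi : 1 ≤ i) (hij : i ≤ j) (hj : j ≤ n) :
    D i ⊆ D j := by
  induction j, hij using Nat.le_induction with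
  | base => exact subset_rfl
  | succ j hij ih => exact (ih (by omega)).trans (hD.1 j (by omega) (by omega))

lemma IncDomChain.zero_mem (hD : IncDomChain G D) {v : Fin n} (hv : v.val = 0) : v ∈ D n := by
  have h1 : 1 ≤ n := by omega
  refine hD.mono le_rfl h1 le_rfl ?_
  obtain ⟨hsub, hdom⟩ := hD.2 1 le_rfl h1
  obtain hvD | ⟨u, hu, huv⟩ := hdom v (by omega)
  · exact hvD
  · exact absurd (Fin.ext (by have := hsub u hu; omega)) huv.ne

lemma IsIncConnDomSet.filter_subset [DecidableRel G.Adj] (hG : G.IsAcyclic) {R : Finset (Fin n)}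
    (hR : IsIncConnDomSet G R) :
    (Finset.univ.filter fun v => v.val = 0 ∨ 2 ≤ G.degree v) ⊆ R := by
  obtain ⟨D, ⟨hD, hconn⟩, rfl⟩ := hR
  intro v hv
  have hn : 1 ≤ n := v.pos
  obtain hv0 | hv2 := (Finset.mem_filter.mp hv).2
  · exact hD.zero_mem hv0
  · exact Finset.mem_coe.mp <| hG.two_le_degree_mem (hconn n hn le_rfl)
      (fun u => by simpa using (hD.2 n hn le_rfl).2 u u.isLt) hv2

end LowerBound

/-- Let `T` be a tree on `n ≥ 2` vertices presented in an
always-connected order. The minimum size of an incremental connected dominating set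
of `T` equals `int(T) + 1` if `v_1` is a leaf of `T` and `int(T)` otherwise, where
`int(T)` is the number of internal vertices (degree at least 2) of `T`. -/
theorem min_inc_connected_dominating_tree {n : ℕ} (hn : 2 ≤ n)
    (T : SimpleGraph (Fin n)) [DecidableRel T.Adj]
    (htree : T.Connected ∧ T.IsAcyclic) (hconn : AlwaysConnected T) :
    IsLeast {k : ℕ | ∃ R : Finset (Fin n), IsIncConnDomSet T R ∧ R.card = k}
      (if T.degree (⟨0, by omega⟩ : Fin n) = 1 then
        (Finset.univ.filter (fun v => 2 ≤ T.degree v)).card + 1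
      else
        (Finset.univ.filter (fun v => 2 ≤ T.degree v)).card) := by
  rw [← card_filter_val_eq_zero_or_two_le_degree _ (hconn.degree_pos (by omega)),
    ← internalChain_self (G := T)]
  refine ⟨⟨_, ⟨internalChain T, hconn.incConnDomChain_internalChain, rfl⟩, rfl⟩, ?_⟩
  rintro k ⟨R, hR, rfl⟩
  exact Finset.card_le_card (internalChain_self (G := T) ▸ hR.filter_subset htree.2)
end

section
/- For every n ≥ 3, the minimum size of an incremental total dominating set of the path P_n given in the standard order is n − 1. -/

theorem cardlem (n m : ℕ) (h : m ≤ n) :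
    (Finset.univ.filter (fun v : Fin n => v.val < m)).card = m := by
  induction m with
  | zero => simp
  | succ k ih =>
    have hk : k ≤ n := by omega
    have : (Finset.univ.filter (fun v : Fin n => v.val < k + 1)) =
        insert ⟨k, by omega⟩ (Finset.univ.filter (fun v : Fin n => v.val < k)) := by
      ext v
      simp only [Finset.mem_filter, Finset.mem_insert, Finset.mem_univ, true_and]
      constructor
      · intro hv
        rcases Nat.lt_or_ge v.val k with h'|h'
        · exact Or.inr h'
        · left; apply Fin.ext; simp only []; omega
      · rintro (rfl|h')
        · simp
        · omega
    rw [this, Finset.card_insert_of_notMem (by simp), ih hk]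


theorem chain_mono {n : ℕ} (D : ℕ → Finset (Fin n))
    (hmono : ∀ i : ℕ, 1 ≤ i → i < n → D i ⊆ D (i + 1)) :
    ∀ i j : ℕ, 1 ≤ i → i ≤ j → j ≤ n → D i ⊆ D j := by
  intro i j hi hij hjn
  induction j with
  | zero => omega
  | succ k ih =>
    rcases Nat.lt_or_ge i (k+1) with h|h
    · exact (ih (by omega) (by omega)).trans (hmono k (by omega) (by omega))
    · have : i = k + 1 := by omega
      subst this; exact subset_rfl

theorem main_proof {n : ℕ} (hn : 3 ≤ n) :
    IsLeast {k : ℕ | ∃ D : ℕ → Finset (Fin n),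
        ((∀ i : ℕ, 1 ≤ i → i < n → D i ⊆ D (i + 1)) ∧
         (∀ i : ℕ, 1 ≤ i → i ≤ n → (∀ v ∈ D i, v.val < i) ∧
           PrefixTotalDom (SimpleGraph.pathGraph n) i (D i))) ∧ (D n).card = k}
      (n - 1) := by
  constructor
  · -- membership: construct the chain
    refine ⟨fun i => Finset.univ.filter (fun v => v.val + 2 ≤ i ∨ (v.val = 1 ∧ 2 ≤ i)),
      ⟨?_, ?_⟩, ?_⟩
    · intro i _ _ v hv
      simp only [Finset.mem_filter, Finset.mem_univ, true_and] at hv ⊢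
      omega
    · intro i hi hin
      constructor
      · intro v hv
        simp only [Finset.mem_filter, Finset.mem_univ, true_and] at hv
        omega
      · intro v hv ⟨u, hui, hadj⟩
        rw [SimpleGraph.pathGraph_adj] at hadj
        rcases Nat.eq_zero_or_pos v.val with h0|h0
        · -- v = v_0, use v_1
          have hi2 : 2 ≤ i := by omega
          refine ⟨⟨1, by omega⟩, ?_, ?_⟩
          · simp only [Finset.mem_filter, Finset.mem_univ, true_and]
            omega
          · rw [SimpleGraph.pathGraph_adj]; right; simp [h0]
        · -- use v_{val-1}
          refine ⟨⟨v.val - 1, by omega⟩, ?_, ?_⟩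
          · simp only [Finset.mem_filter, Finset.mem_univ, true_and]
            left; omega
          · rw [SimpleGraph.pathGraph_adj]; left; simp; omega
    · -- cardinality
      have : (Finset.univ.filter (fun v : Fin n => v.val + 2 ≤ n ∨ (v.val = 1 ∧ 2 ≤ n)))
          = Finset.univ.filter (fun v : Fin n => v.val < n - 1) := by
        apply Finset.filter_congr
        intro v _
        try simp only [eq_iff_iff]
        constructor <;> intro h <;> omega
      show (Finset.univ.filter (fun v : Fin n => v.val + 2 ≤ n ∨ (v.val = 1 ∧ 2 ≤ n))).card = n - 1
      rw [this, cardlem n (n-1) (by omega)]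
  · -- lower bound
    rintro k ⟨D, ⟨hmono, hdom⟩, hcard⟩
    have hsub : Finset.univ.filter (fun v : Fin n => v.val < n - 1) ⊆ D n := by
      intro v hv
      simp only [Finset.mem_filter, Finset.mem_univ, true_and] at hv
      set j := v.val with hj
      have hjn : j + 2 ≤ n := by omega
      -- apply total domination at step j+2 to vertex j+1
      obtain ⟨_, hptd⟩ := hdom (j+2) (by omega) hjn
      obtain ⟨w, hw, hadj⟩ := hptd ⟨j+1, by omega⟩ (by simp) ⟨⟨j, by omega⟩, by simp,
        by rw [SimpleGraph.pathGraph_adj]; left; simp⟩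
      rw [SimpleGraph.pathGraph_adj] at hadj
      have hwlt : w.val < j + 2 := (hdom (j+2) (by omega) hjn).1 w hw
      have hwv : w = v := by
        apply Fin.ext
        simp only [] at hadj
        omega
      subst hwv
      exact chain_mono D hmono (j+2) n (by omega) hjn le_rfl hw
    calc n - 1 = (Finset.univ.filter (fun v : Fin n => v.val < n - 1)).card :=
          (cardlem n (n-1) (by omega)).symm
      _ ≤ (D n).card := Finset.card_le_card hsub
      _ = k := hcard

/-- For every `n ≥ 3`, the minimum size of an incremental total
dominating set of the path `P_n` given in the standard order is `n − 1`. -/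
theorem min_inc_total_dominating_path {n : ℕ} (hn : 3 ≤ n) :
    IsLeast {k : ℕ | ∃ D : ℕ → Finset (Fin n),
        IncTotalDomChain (SimpleGraph.pathGraph n) D ∧ (D n).card = k}
      (n - 1) := by
  exact main_proof hn
end

section
/- For every online dominating-set algorithm A and every n ≥ 1, there exists a tree T on vertex set {1, …, n} such that for every i with 1 ≤ i ≤ n the subgraph of T induced by {1, …, i} is connected, and |A(n, T)| ≥ n − 1. -/
/-- `H` is a graph on the vertex set `{v_0, …, v_{i-1}}` (0-indexed version of
`{1, …, i}`): all its edges join vertices with index `< i`. -/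
def GraphOn (H : SimpleGraph ℕ) (i : ℕ) : Prop :=
  ∀ a b : ℕ, H.Adj a b → a < i ∧ b < i

/-- The subgraph of `H` induced by the first `i` vertices, viewed again as a graph
on `ℕ`. -/
def restrict (H : SimpleGraph ℕ) (i : ℕ) : SimpleGraph ℕ where
  Adj a b := H.Adj a b ∧ a < i ∧ b < i
  symm := by
    constructor
    intro a b h
    exact ⟨h.1.symm, h.2.2, h.2.1⟩
  loopless := by
    constructor
    intro a h
    exact H.irrefl h.1

/-!
The adversary presents the tree vertex by vertex, attaching each new vertex `i` to a vertex
`p < i` that `A` has not selected so far. Then `i` can only be dominated by itself or by `p`,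
so `A` must select a new vertex at every step; if instead every earlier vertex is already
selected, `A` has selected `i` vertices anyway. Trees are encoded by parent functions
`f` with `f a < a` for `a > 0`, which makes the initial segments connected.
-/

open SimpleGraph

/-- Each vertex `a < n` is joined to `f a`; when `f a ≤ a` for all `a`, this is a forest whose
roots are the fixed points of `f`. -/
def parentGraph (f : ℕ → ℕ) (n : ℕ) : SimpleGraph ℕ :=
  fromRel fun a b => a < n ∧ b = f a

section ParentGraph

variable {f : ℕ → ℕ}

lemma parentGraph_congr {g : ℕ → ℕ} {n : ℕ} (h : ∀ a < n, f a = g a) :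
    parentGraph f n = parentGraph g n := by
  ext a b
  simp only [parentGraph, fromRel_adj]
  constructor <;> rintro ⟨hab, (⟨ha, rfl⟩ | ⟨hb, rfl⟩)⟩ <;> simp_all

lemma parentGraph_succ (n : ℕ) : parentGraph f (n + 1) = parentGraph f n ⊔ edge n (f n) := by
  ext a b
  simp only [parentGraph, fromRel_adj, sup_adj, edge_adj]
  grind

variable (hf : ∀ a, f a ≤ a)
include hf

lemma parentGraph_graphOn (n : ℕ) : GraphOn (parentGraph f n) n := by
  rintro a b ⟨-, ⟨ha, rfl⟩ | ⟨hb, rfl⟩⟩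
  · exact ⟨ha, (hf a).trans_lt ha⟩
  · exact ⟨(hf b).trans_lt hb, hb⟩

lemma restrict_parentGraph {i n : ℕ} (hin : i ≤ n) :
    restrict (parentGraph f n) i = parentGraph f i := by
  ext a b
  simp only [restrict, parentGraph, fromRel_adj]
  grind

lemma parentGraph_not_adj_of_le {n a b : ℕ} (ha : n ≤ a) : ¬ (parentGraph f n).Adj a b := by
  rintro ⟨hab, ⟨h, -⟩ | ⟨hb, rfl⟩⟩
  · omega
  · exact absurd ((hf b).trans_lt hb) (by omega)

lemma parentGraph_adj_last {i u : ℕ} (h : (parentGraph f (i + 1)).Adj u i) : u = f i := by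
  obtain ⟨hui, ⟨hu, rfl⟩ | ⟨-, rfl⟩⟩ := h
  · exact absurd (le_antisymm (Nat.le_of_lt_succ hu) (hf u)) hui
  · rfl

/-- Vertex `n` is isolated in `parentGraph f n`, so the edge to its parent joins two components. -/
lemma parentGraph_isAcyclic (n : ℕ) : (parentGraph f n).IsAcyclic := by
  induction n with
  | zero =>
    convert isAcyclic_bot
    ext a b
    exact iff_of_false (parentGraph_not_adj_of_le hf (Nat.zero_le a)) id
  | succ n ih =>
    rw [parentGraph_succ]
    rcases (hf n).lt_or_eq with hlt | heq
    · refine ih.sup_edge_of_not_reachable fun hreach => ?_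
      obtain ⟨b, hb⟩ := hreach.nonempty_neighborSet_left hlt.ne'
      exact parentGraph_not_adj_of_le hf le_rfl hb
    · rwa [heq, edge_self_eq_bot, sup_bot_eq]

omit hf in
lemma parentGraph_induce_connected (hf : ∀ a, 0 < a → f a < a) {i n : ℕ} (hi : 0 < i)
    (hin : i ≤ n) : ((parentGraph f n).induce {v | v < i}).Connected := by
  rw [connected_iff_exists_forall_reachable]
  refine ⟨⟨0, hi⟩, fun ⟨v, hv⟩ => ?_⟩
  induction v using Nat.strong_induction_on with
  | _ v ih =>
    rcases Nat.eq_zero_or_pos v with rfl | hv0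
    · rfl
    · have hfv := hf v hv0
      have hadj : ((parentGraph f n).induce {v | v < i}).Adj ⟨f v, hfv.trans hv⟩ ⟨v, hv⟩ :=
        ⟨hfv.ne, Or.inr ⟨lt_of_lt_of_le hv hin, rfl⟩⟩
      exact (ih (f v) hfv (hfv.trans hv)).trans hadj.reachable

end ParentGraph

noncomputable def outsideVertex (S : Finset ℕ) (i : ℕ) : ℕ :=
  if h : ∃ p < i, p ∉ S then h.choose else 0

lemma outsideVertex_notMem {S : Finset ℕ} {i : ℕ} (h : ∃ p < i, p ∉ S) :
    outsideVertex S i ∉ S := by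
  rw [outsideVertex, dif_pos h]
  exact h.choose_spec.2

lemma outsideVertex_lt {S : Finset ℕ} {i : ℕ} (hi : 0 < i) : outsideVertex S i < i := by
  unfold outsideVertex
  split_ifs with h
  exacts [h.choose_spec.1, hi]

lemma outsideVertex_le (S : Finset ℕ) (i : ℕ) : outsideVertex S i ≤ i := by
  rcases Nat.eq_zero_or_pos i with rfl | hi
  · simp [outsideVertex]
  · exact (outsideVertex_lt hi).le

section Adversary

variable (A : ℕ → SimpleGraph ℕ → Finset ℕ)

noncomputable def adversaryParent (i : ℕ) : ℕ :=
  outsideVertex (A i (parentGraph (fun j => if j < i then adversaryParent j else 0) i)) i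
termination_by i

lemma adversaryParent_eq (i : ℕ) :
    adversaryParent A i = outsideVertex (A i (parentGraph (adversaryParent A) i)) i := by
  rw [adversaryParent]
  congr 2
  exact parentGraph_congr fun j hj => if_pos hj

lemma adversaryParent_lt {i : ℕ} (hi : 0 < i) : adversaryParent A i < i := by
  rw [adversaryParent_eq]
  exact outsideVertex_lt hi

lemma adversaryParent_le (i : ℕ) : adversaryParent A i ≤ i := by
  rw [adversaryParent_eq]
  exact outsideVertex_le _ i

variable {A}
variable (hdom : ∀ (i : ℕ) (H : SimpleGraph ℕ), GraphOn H i →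
      (∀ v ∈ A i H, v < i) ∧
      ∀ v : ℕ, v < i → v ∈ A i H ∨ ∃ u ∈ A i H, H.Adj u v)
variable (hmono : ∀ (i : ℕ) (H : SimpleGraph ℕ), GraphOn H (i + 1) →
      A i (restrict H i) ⊆ A (i + 1) H)
variable {f : ℕ → ℕ} (hf : ∀ a, f a ≤ a)

include hmono hf in
lemma subset_succ_parentGraph (i : ℕ) :
    A i (parentGraph f i) ⊆ A (i + 1) (parentGraph f (i + 1)) := by
  simpa only [restrict_parentGraph hf i.le_succ] using hmono i _ (parentGraph_graphOn hf (i + 1))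

include hdom hmono hf in
/-- Vertex `i` must be dominated, and its only neighbour is its unselected parent. -/
lemma card_lt_card_succ_parentGraph {i : ℕ} (hfi : f i ∉ A i (parentGraph f i)) :
    (A i (parentGraph f i)).card < (A (i + 1) (parentGraph f (i + 1))).card := by
  refine Finset.card_lt_card ⟨subset_succ_parentGraph hmono hf i, fun hsub => ?_⟩
  obtain hi | ⟨u, hu, hadj⟩ := (hdom (i + 1) _ (parentGraph_graphOn hf _)).2 i i.lt_succ_self
  · exact (hdom i _ (parentGraph_graphOn hf i)).1 i (hsub hi) |>.false
  · exact hfi (parentGraph_adj_last hf hadj ▸ hsub hu)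

include hdom hmono in
lemma le_card_adversary (n : ℕ) :
    n - 1 ≤ (A n (parentGraph (adversaryParent A) n)).card := by
  have hf := adversaryParent_le A
  induction n with
  | zero => simp
  | succ i ih =>
    by_cases h : ∃ p < i, p ∉ A i (parentGraph (adversaryParent A) i)
    · have hnot : adversaryParent A i ∉ A i (parentGraph (adversaryParent A) i) := by
        rw [adversaryParent_eq]
        exact outsideVertex_notMem h
      have := card_lt_card_succ_parentGraph hdom hmono hf hnot
      omega
    · push Not at h
      have hrange : Finset.range i ⊆ A i (parentGraph (adversaryParent A) i) :=
        fun p hp => h p (Finset.mem_range.mp hp)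
      calc i + 1 - 1 = (Finset.range i).card := by simp
        _ ≤ _ := Finset.card_le_card hrange
        _ ≤ _ := Finset.card_le_card (subset_succ_parentGraph hmono hf i)

end Adversary

theorem online_dominating_tree_lower_bound_general
    (A : ℕ → SimpleGraph ℕ → Finset ℕ)
    (hdom : ∀ (i : ℕ) (H : SimpleGraph ℕ), GraphOn H i →
      (∀ v ∈ A i H, v < i) ∧
      ∀ v : ℕ, v < i → v ∈ A i H ∨ ∃ u ∈ A i H, H.Adj u v)
    (hmono : ∀ (i : ℕ) (H : SimpleGraph ℕ), GraphOn H (i + 1) →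
      A i (restrict H i) ⊆ A (i + 1) H)
    (n : ℕ) :
    ∃ T : SimpleGraph ℕ, GraphOn T n ∧ T.IsAcyclic ∧
      (∀ i : ℕ, 1 ≤ i → i ≤ n → (T.induce {v : ℕ | v < i}).Connected) ∧
      n - 1 ≤ (A n T).card :=
  ⟨parentGraph (adversaryParent A) n, parentGraph_graphOn (adversaryParent_le A) n,
    parentGraph_isAcyclic (adversaryParent_le A) n,
    fun _ hi hin => parentGraph_induce_connected (fun _ => adversaryParent_lt A) hi hin,
    le_card_adversary hdom hmono n⟩

/-- For every online dominating-set algorithm `A` — a function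
assigning to each `i` and each graph `H` on the first `i` vertices a dominating set
`A i H ⊆ {v_0, …, v_{i-1}}` of `H`, monotone under extending the graph by one
vertex — and every `n ≥ 1`, there exists a tree `T` on the first `n` vertices,
presented in an always-connected order, on which `A` selects at least `n − 1`
vertices. -/
theorem online_dominating_tree_lower_bound
    (A : ℕ → SimpleGraph ℕ → Finset ℕ)
    (hdom : ∀ (i : ℕ) (H : SimpleGraph ℕ), GraphOn H i →
      (∀ v ∈ A i H, v < i) ∧
      ∀ v : ℕ, v < i → v ∈ A i H ∨ ∃ u ∈ A i H, H.Adj u v)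
    (hmono : ∀ (i : ℕ) (H : SimpleGraph ℕ), GraphOn H (i + 1) →
      A i (restrict H i) ⊆ A (i + 1) H)
    (n : ℕ) (hn : 1 ≤ n) :
    ∃ T : SimpleGraph ℕ, GraphOn T n ∧ T.IsAcyclic ∧
      (∀ i : ℕ, 1 ≤ i → i ≤ n → (T.induce {v : ℕ | v < i}).Connected) ∧
      n - 1 ≤ (A n T).card :=
  online_dominating_tree_lower_bound_general A hdom hmono n
end

section
/- Let G be a connected bipartite graph with bipartition (A, B), with vertices listed in an order v_1, …, v_n such that every prefix graph G_i is connected. Then for every i with 1 ≤ i ≤ n, the set (A ∪ {v_1}) ∩ {v_1, …, v_i} is a dominating set of G_i; in particular, taking A to be the smaller partite set, G has an incremental dominating set of size at most min(|A|, |B|) + 1. -/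
lemma helperDom {n : ℕ} (hn : 1 ≤ n) (G : SimpleGraph (Fin n))
    (A B : Finset (Fin n)) (hpart : A ∪ B = Finset.univ) (hdisj : Disjoint A B)
    (hbip : ∀ u v : Fin n, G.Adj u v → (u ∈ A ∧ v ∈ B) ∨ (u ∈ B ∧ v ∈ A))
    (hconn : AlwaysConnected G) :
    ∀ i : ℕ, 1 ≤ i → i ≤ n →
      PrefixDom G i ((A ∪ {(⟨0, hn⟩ : Fin n)}).filter (fun v => v.val < i)) := by
  intro i h1 h2 v hv
  by_cases hvD : v ∈ A ∪ {(⟨0, hn⟩ : Fin n)}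
  · left; exact Finset.mem_filter.2 ⟨hvD, hv⟩
  · right
    have hvA : v ∉ A := fun h => hvD (Finset.mem_union_left _ h)
    have hvB : v ∈ B := by
      have : v ∈ A ∪ B := hpart ▸ Finset.mem_univ v
      rcases Finset.mem_union.1 this with h | h
      · exact absurd h hvA
      · exact h
    have hv0 : v ≠ ⟨0, hn⟩ := fun h => hvD (Finset.mem_union_right _ (by simp [h]))
    have h0 : ((⟨0, hn⟩ : Fin n)).val < i := h1
    obtain ⟨p⟩ := (hconn i h1 h2).preconnected ⟨v, hv⟩ ⟨⟨0, hn⟩, h0⟩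
    cases p with
    | nil => exact (hv0 rfl).elim
    | @cons _ w _ h q =>
      have hadj : G.Adj v w.val := h
      have hwA : w.val ∈ A := by
        rcases hbip v w.val hadj with ⟨h1', _⟩ | ⟨_, h2'⟩
        · exact absurd h1' hvA
        · exact h2'
      exact ⟨w.val, Finset.mem_filter.2 ⟨Finset.mem_union_left _ hwA, w.2⟩, hadj.symm⟩

lemma helperChain {n : ℕ} (hn : 1 ≤ n) (G : SimpleGraph (Fin n))
    (A B : Finset (Fin n)) (hpart : A ∪ B = Finset.univ) (hdisj : Disjoint A B)
    (hbip : ∀ u v : Fin n, G.Adj u v → (u ∈ A ∧ v ∈ B) ∨ (u ∈ B ∧ v ∈ A))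
    (hconn : AlwaysConnected G) :
    IsIncDomSet G (A ∪ {(⟨0, hn⟩ : Fin n)}) := by
  refine ⟨fun i => (A ∪ {(⟨0, hn⟩ : Fin n)}).filter (fun v => v.val < i),
    ⟨fun i _ _ => by
       intro v hv
       rw [Finset.mem_filter] at hv ⊢
       exact ⟨hv.1, Nat.lt_succ_of_lt hv.2⟩,
     fun i h1 h2 => ⟨fun v hv => (Finset.mem_filter.1 hv).2,
       helperDom hn G A B hpart hdisj hbip hconn i h1 h2⟩⟩, ?_⟩
  exact (Finset.filter_true_of_mem (fun v _ => v.isLt)).symm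

/-- Let `G` be a connected bipartite graph with bipartition
`(A, B)`, presented in an always-connected order. Then for every `1 ≤ i ≤ n`, the
set `(A ∪ {v_1}) ∩ {v_1, …, v_i}` is a dominating set of `G_i`; in particular,
`G` has an incremental dominating set of size at most `min(|A|, |B|) + 1`. -/
theorem smaller_partite_set_inc_dominating {n : ℕ} (hn : 1 ≤ n)
    (G : SimpleGraph (Fin n)) (hG : G.Connected) (A B : Finset (Fin n))
    (hpart : A ∪ B = Finset.univ) (hdisj : Disjoint A B)
    (hbip : ∀ u v : Fin n, G.Adj u v → (u ∈ A ∧ v ∈ B) ∨ (u ∈ B ∧ v ∈ A))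
    (hconn : AlwaysConnected G) :
    (∀ i : ℕ, 1 ≤ i → i ≤ n →
      PrefixDom G i ((A ∪ {(⟨0, hn⟩ : Fin n)}).filter (fun v => v.val < i))) ∧
    ∃ R : Finset (Fin n), IsIncDomSet G R ∧
      R.card ≤ min A.card B.card + 1 := by
  constructor
  · exact helperDom hn G A B hpart hdisj hbip hconn
  · rcases le_total A.card B.card with hle | hle
    · refine ⟨A ∪ {(⟨0, hn⟩ : Fin n)},
        helperChain hn G A B hpart hdisj hbip hconn, ?_⟩
      calc (A ∪ {(⟨0, hn⟩ : Fin n)}).card ≤ A.card + 1 := by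
            simpa using Finset.card_union_le A {(⟨0, hn⟩ : Fin n)}
        _ = min A.card B.card + 1 := by rw [min_eq_left hle]
    · refine ⟨B ∪ {(⟨0, hn⟩ : Fin n)},
        helperChain hn G B A (by rw [Finset.union_comm]; exact hpart) hdisj.symm
          (fun u v h => (hbip u v h).symm) hconn, ?_⟩
      calc (B ∪ {(⟨0, hn⟩ : Fin n)}).card ≤ B.card + 1 := by
            simpa using Finset.card_union_le B {(⟨0, hn⟩ : Fin n)}
        _ = min A.card B.card + 1 := by rw [min_eq_right hle]
end

section
/- Let G be a graph with vertices listed in an always-connected order v_1, …, v_n, and let L be the layer function of the ordering. Then both the set E of vertices with even layer number and the set O ∪ {v_1}, where O is the set of vertices with odd layer number, satisfy: for every i, their intersection with {v_1, …, v_i} is a dominating set of G_i. Consequently, G has an incremental dominating set of size at most ⌊n/2⌋ + 1. -/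
/-- `L` is the layer function of the (always-connected) ordering of `G`:
`L v₁ = 0` and, for each later vertex `v`,
`L v = 1 + min { L u : u earlier than v and adjacent to v }`. -/
def IsLayerFn {n : ℕ} (G : SimpleGraph (Fin n)) (hn : 1 ≤ n) (L : Fin n → ℕ) : Prop :=
  L (⟨0, hn⟩ : Fin n) = 0 ∧
  ∀ v : Fin n, 0 < v.val →
    L v = 1 + sInf (L '' {u : Fin n | u.val < v.val ∧ G.Adj u v})

/-!
Every vertex `v ≠ v₁` has an earlier neighbour `u` with `L v = L u + 1`, namely one realising
the minimum in the definition of `L`; it lies in the other parity class. Hence each of the two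
classes `E` and `O ∪ {v₁}` contains an earlier neighbour of every vertex outside it, so its
traces on the prefixes form an incremental dominating chain. The two classes cover all `n`
vertices and share only `v₁`, so one of them has at most `⌊n/2⌋ + 1` elements.
-/

namespace AlwaysConnected

variable {n : ℕ} {G : SimpleGraph (Fin n)}

theorem exists_adj_lt_s12 (hconn : AlwaysConnected G) {v : Fin n} (hv : 0 < v.val) :
    ∃ u : Fin n, u.val < v.val ∧ G.Adj u v := by
  set S : Set (Fin n) := {w | w.val < v.val + 1}
  have hS : S.Nontrivial :=
    ⟨v, Nat.lt_succ_self _, ⟨0, by omega⟩, Nat.succ_pos _, Fin.ne_of_val_ne hv.ne'⟩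
  have : Nontrivial S := hS.coe_sort
  obtain ⟨u, hu⟩ :=
    (hconn (v.val + 1) (by omega) v.isLt).preconnected.exists_adj_of_nontrivial ⟨v, by simp⟩
  have hle : u.val.val < v.val + 1 := u.2
  have hne : u.val.val ≠ v.val := fun h => hu.ne (Subtype.ext (Fin.ext h)).symm
  exact ⟨u, by omega, hu.symm⟩

end AlwaysConnected

theorem IsLayerFn.exists_adj_lt_succ {n : ℕ} {hn : 1 ≤ n} {G : SimpleGraph (Fin n)}
    {L : Fin n → ℕ} (hL : IsLayerFn G hn L) (hconn : AlwaysConnected G) {v : Fin n}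
    (hv : 0 < v.val) : ∃ u : Fin n, u.val < v.val ∧ G.Adj u v ∧ L v = L u + 1 := by
  obtain ⟨u₀, hu₀⟩ := hconn.exists_adj_lt_s12 hv
  obtain ⟨u, hu, huL⟩ :=
    Nat.sInf_mem (s := L '' {u | u.val < v.val ∧ G.Adj u v}) ⟨_, u₀, hu₀, rfl⟩
  exact ⟨u, hu.1, hu.2, by rw [hL.2 v hv, huL, add_comm]⟩

section Filter

variable {n : ℕ} {G : SimpleGraph (Fin n)} {P : Fin n → Prop} [DecidablePred P]

theorem prefixDom_filter_of_exists_adj_lt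
    (hP : ∀ v, ¬ P v → ∃ u : Fin n, u.val < v.val ∧ P u ∧ G.Adj u v) (i : ℕ) :
    PrefixDom G i (Finset.univ.filter fun v => P v ∧ v.val < i) := by
  intro v hvi
  by_cases hv : P v
  · exact Or.inl (by simp [hv, hvi])
  · obtain ⟨u, huv, hu, hadj⟩ := hP v hv
    exact Or.inr ⟨u, by simp [hu]; omega, hadj⟩

theorem isIncDomSet_filter_of_exists_adj_lt
    (hP : ∀ v, ¬ P v → ∃ u : Fin n, u.val < v.val ∧ P u ∧ G.Adj u v) :
    IsIncDomSet G (Finset.univ.filter P) := by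
  refine ⟨fun i => Finset.univ.filter fun v => P v ∧ v.val < i, ⟨?_, ?_⟩, by simp⟩
  · intro i _ _ v
    simp only [Finset.mem_filter]
    exact fun ⟨hu, hP, hvi⟩ => ⟨hu, hP, by omega⟩
  · exact fun i _ _ => ⟨fun v hv => (Finset.mem_filter.1 hv).2.2,
      prefixDom_filter_of_exists_adj_lt hP i⟩

end Filter

theorem card_filter_even_add_card_filter_odd_or_eq {α : Type*} [Fintype α] [DecidableEq α]
    {f : α → ℕ} {a : α} (ha : Even (f a)) :
    (Finset.univ.filter fun x => Even (f x)).card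
      + (Finset.univ.filter fun x => Odd (f x) ∨ x = a).card = Fintype.card α + 1 := by
  have hodd : (Finset.univ.filter fun x => Odd (f x) ∨ x = a)
      = insert a (Finset.univ.filter fun x => Odd (f x)) := by
    ext x
    simp [or_comm]
  rw [hodd, Finset.card_insert_of_notMem (by simpa using ha), ← add_assoc]
  simp only [← Nat.not_even_iff_odd]
  rw [Finset.card_filter_add_card_filter_not, Finset.card_univ]

/-- Let `G` be presented in an always-connected order with layer
function `L`. Then both the set of vertices with even layer number and the set of
vertices with odd layer number together with `v_1` dominate every prefix graph
`G_i` (after intersecting with `{v_1, …, v_i}`). Consequently, `G` has an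
incremental dominating set of size at most `⌊n/2⌋ + 1`. -/
theorem layers_inc_dominating {n : ℕ} (hn : 1 ≤ n) (G : SimpleGraph (Fin n))
    (hconn : AlwaysConnected G) (L : Fin n → ℕ) (hL : IsLayerFn G hn L) :
    (∀ i : ℕ, 1 ≤ i → i ≤ n →
      PrefixDom G i (Finset.univ.filter (fun v => Even (L v) ∧ v.val < i)) ∧
      PrefixDom G i (Finset.univ.filter
        (fun v => (Odd (L v) ∨ v = (⟨0, hn⟩ : Fin n)) ∧ v.val < i))) ∧
    ∃ R : Finset (Fin n), IsIncDomSet G R ∧ R.card ≤ n / 2 + 1 := by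
  set v₀ : Fin n := ⟨0, hn⟩
  have hv₀ : Even (L v₀) := by rw [hL.1]; exact Even.zero
  have hpos : ∀ v : Fin n, v ≠ v₀ → 0 < v.val := fun v hv =>
    Nat.pos_of_ne_zero fun h => hv (Fin.ext h)
  have hE : ∀ v, ¬ Even (L v) → ∃ u : Fin n, u.val < v.val ∧ Even (L u) ∧ G.Adj u v := by
    intro v hv
    have hv₀v : v ≠ v₀ := by rintro rfl; exact hv hv₀
    obtain ⟨u, huv, hadj, hLv⟩ := hL.exists_adj_lt_succ hconn (hpos v hv₀v)
    exact ⟨u, huv, by rw [hLv, Nat.even_add_one, not_not] at hv; exact hv, hadj⟩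
  have hO : ∀ v, ¬ (Odd (L v) ∨ v = v₀) →
      ∃ u : Fin n, u.val < v.val ∧ (Odd (L u) ∨ u = v₀) ∧ G.Adj u v := by
    intro v hv
    push Not at hv
    obtain ⟨u, huv, hadj, hLv⟩ := hL.exists_adj_lt_succ hconn (hpos v hv.2)
    rw [hLv, Nat.odd_add_one, not_not] at hv
    exact ⟨u, huv, Or.inl hv.1, hadj⟩
  refine ⟨fun i _ _ => ⟨prefixDom_filter_of_exists_adj_lt hE i,
    prefixDom_filter_of_exists_adj_lt hO i⟩, ?_⟩
  have hcard := card_filter_even_add_card_filter_odd_or_eq (f := L) hv₀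
  rw [Fintype.card_fin] at hcard
  by_cases hsmall : (Finset.univ.filter fun v => Even (L v)).card ≤ n / 2 + 1
  · exact ⟨_, isIncDomSet_filter_of_exists_adj_lt hE, hsmall⟩
  · exact ⟨_, isIncDomSet_filter_of_exists_adj_lt hO, by omega⟩
end

section
/- Let G be a graph with vertices listed in an always-connected order v_1, …, v_n with layer function L, and let k ≥ 1. If some vertex v of G has L(v) ≥ 2k, then every incremental dominating set of G has size at least k + 1. -/
/-- Let `G` be presented in an always-connected order with layer
function `L` and let `k ≥ 1`. If some vertex of `G` has layer number at least `2k`,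
then every incremental dominating set of `G` has size at least `k + 1`. -/
theorem layer_lower_bound_inc_dominating {n : ℕ} (hn : 1 ≤ n)
    (G : SimpleGraph (Fin n)) (hconn : AlwaysConnected G)
    (L : Fin n → ℕ) (hL : IsLayerFn G hn L)
    (k : ℕ) (hk : 1 ≤ k) (hv : ∃ v : Fin n, 2 * k ≤ L v) :
    ∀ R : Finset (Fin n), IsIncDomSet G R → k + 1 ≤ R.card := by
  classical
  obtain ⟨v, hv2k⟩ := hv
  rintro R ⟨D, ⟨hmonoD, hdom⟩, rfl⟩
  -- every D i (1 ≤ i ≤ n) is contained in D n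
  have hDsub : ∀ i : ℕ, 1 ≤ i → i ≤ n → D i ⊆ D n := by
    intro i h1 h2
    have key : ∀ j : ℕ, i ≤ j → j ≤ n → D i ⊆ D j := by
      intro j hij
      induction j, hij using Nat.le_induction with
      | base => intro _; exact subset_rfl
      | succ j hij ih =>
          intro hjn
          exact (ih (by omega)).trans (hmonoD j (by omega) (by omega))
    exact key n h2 le_rfl
  -- m s = minimal index of a vertex of layer ≥ s
  set m : ℕ → ℕ := fun s => sInf {t : ℕ | ∃ u : Fin n, s ≤ L u ∧ u.val = t} with hm
  have hmem : ∀ s, s ≤ 2 * k → ∃ u : Fin n, s ≤ L u ∧ u.val = m s := by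
    intro s hs
    have hne : {t : ℕ | ∃ u : Fin n, s ≤ L u ∧ u.val = t}.Nonempty :=
      ⟨v.val, ⟨v, le_trans hs hv2k, rfl⟩⟩
    exact Nat.sInf_mem hne
  have hle : ∀ s (u : Fin n), s ≤ L u → m s ≤ u.val := by
    intro s u h
    exact Nat.sInf_le ⟨u, h, rfl⟩
  have h0 : L ⟨0, hn⟩ = 0 := hL.1
  have hpos : ∀ u : Fin n, 1 ≤ L u → 0 < u.val := by
    intro u hu
    by_contra h
    have : u = ⟨0, hn⟩ := by
      apply Fin.ext; show u.val = 0; omega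
    rw [this, h0] at hu; omega
  -- m is strictly increasing on [0, 2k]
  have hstrict : ∀ s, s + 1 ≤ 2 * k → m s < m (s + 1) := by
    intro s hs
    obtain ⟨w, hw1, hw2⟩ := hmem (s + 1) hs
    have hwpos : 0 < w.val := hpos w (by omega)
    rcases Nat.eq_zero_or_pos s with hs0 | hs1
    · subst hs0
      have hm0 : m 0 ≤ 0 := hle 0 ⟨0, hn⟩ (Nat.zero_le _)
      omega
    · have hwL := hL.2 w hwpos
      set X := L '' {u : Fin n | u.val < w.val ∧ G.Adj u w} with hX
      have hXne : X.Nonempty := by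
        by_contra hne
        rw [Set.not_nonempty_iff_eq_empty] at hne
        rw [hne, Nat.sInf_empty] at hwL
        omega
      obtain ⟨u, ⟨hu1, hu2⟩, hu3⟩ := Nat.sInf_mem hXne
      have hLu : s ≤ L u := by
        rw [hu3]; omega
      have := hle s u hLu
      omega
  have hmono2 : ∀ a b : ℕ, a ≤ b → b ≤ 2 * k → m a ≤ m b := by
    intro a b hab
    induction b, hab using Nat.le_induction with
    | base => intro _; exact le_rfl
    | succ b hab ih =>
        intro hb
        exact le_trans (ih (by omega)) (le_of_lt (hstrict b (by omega)))
  -- key: for each s ≤ 2k there is an element of D n with index in [m (s-1), m s]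
  have hkey : ∀ s, s ≤ 2 * k →
      ∃ r : Fin n, r ∈ D n ∧ r.val ≤ m s ∧ (1 ≤ s → m (s - 1) ≤ r.val) := by
    intro s hs
    obtain ⟨w, hw1, hw2⟩ := hmem s hs
    have h1i : 1 ≤ w.val + 1 := by omega
    have hin : w.val + 1 ≤ n := w.isLt
    obtain ⟨hbound, hdomi⟩ := hdom (w.val + 1) h1i hin
    rcases hdomi w (by omega) with hwD | ⟨r, hrD, hadj⟩
    · refine ⟨w, hDsub _ h1i hin hwD, le_of_eq hw2, fun h1s => ?_⟩
      have := hle (s - 1) w (le_trans (Nat.sub_le s 1) hw1)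
      omega
    · have hrval : r.val < w.val := by
        have h1 := hbound r hrD
        have : r ≠ w := by
          intro h; rw [h] at hadj; exact G.irrefl hadj
        have : r.val ≠ w.val := fun h => this (Fin.ext h)
        omega
      refine ⟨r, hDsub _ h1i hin hrD, by omega, fun h1s => ?_⟩
      have hwpos : 0 < w.val := by omega
      have hwL := hL.2 w hwpos
      have hmemim : L r ∈ L '' {u : Fin n | u.val < w.val ∧ G.Adj u w} :=
        ⟨r, ⟨hrval, hadj⟩, rfl⟩
      have hinf := Nat.sInf_le hmemim
      have hLr : s - 1 ≤ L r := by omega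
      have := hle (s - 1) r hLr
      omega
  choose r hrD hrub hrlb using fun j : Fin (k + 1) =>
    hkey (2 * j.val) (by omega)
  -- the r's are pairwise distinct
  have hmain : ∀ a b : Fin (k + 1), a.val < b.val → (r a).val < (r b).val := by
    intro a b hab
    have h1 : (r a).val ≤ m (2 * a.val) := hrub a
    have h2 : m (2 * b.val - 1) ≤ (r b).val := hrlb b (by omega)
    have h3 : m (2 * a.val) < m (2 * a.val + 1) := hstrict _ (by omega)
    have h4 : m (2 * a.val + 1) ≤ m (2 * b.val - 1) :=
      hmono2 _ _ (by omega) (by omega)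
    omega
  have hinj : Set.InjOn r (Finset.univ : Finset (Fin (k + 1))) := by
    intro j _ j' _ hjj'
    apply Fin.ext
    rcases lt_trichotomy j.val j'.val with h | h | h
    · have := hmain j j' h; rw [hjj'] at this; omega
    · exact h
    · have := hmain j' j h; rw [hjj'] at this; omega
  have hcard := Finset.card_le_card_of_injOn r (fun j _ => hrD j) hinj
  simpa using hcard
end

section
/- Let G be a graph with vertices listed in an always-connected order v_1, …, v_n, and let D_1 ⊆ D_2 ⊆ ⋯ ⊆ D_n be a chain of vertex sets produced by the Parent rule: D_1 = {v_1}, and for each i ≥ 2, if v_i is in D_{i−1} or adjacent to a vertex of D_{i−1} then D_i = D_{i−1}, and otherwise D_i = D_{i−1} ∪ {u} for some vertex u ∈ {v_1, …, v_{i−1}} adjacent to v_i. Then for every i, D_i is a dominating set of G_i whose induced subgraph is connected; in particular D_n is an incremental connected dominating set of G. -/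
/-- Let `G` be presented in an always-connected order, and let
`D_1 ⊆ ⋯ ⊆ D_n` be produced by the Parent rule: `D_1 = {v_1}`, and when `v_{i+1}`
arrives, nothing is added if `v_{i+1}` is already in `D_i` or dominated by `D_i`;
otherwise some earlier neighbor of `v_{i+1}` is added. Then every `D_i`
(for `1 ≤ i ≤ n`) is a dominating set of `G_i` inducing a connected subgraph; in
particular `D_n` is an incremental connected dominating set of `G`. -/
theorem parent_rule_inc_connected_dominating {n : ℕ} (hn : 1 ≤ n)
    (G : SimpleGraph (Fin n)) (hconn : AlwaysConnected G)
    (D : ℕ → Finset (Fin n))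
    (hD1 : D 1 = {(⟨0, hn⟩ : Fin n)})
    (hstep : ∀ (i : ℕ) (hi : i < n), 1 ≤ i →
      (((⟨i, hi⟩ : Fin n) ∈ D i ∨ ∃ u ∈ D i, G.Adj u ⟨i, hi⟩) → D (i + 1) = D i) ∧
      (¬ ((⟨i, hi⟩ : Fin n) ∈ D i ∨ ∃ u ∈ D i, G.Adj u ⟨i, hi⟩) →
        ∃ u : Fin n, u.val < i ∧ G.Adj u ⟨i, hi⟩ ∧ D (i + 1) = D i ∪ {u})) :
    (∀ i : ℕ, 1 ≤ i → i ≤ n → (∀ v ∈ D i, v.val < i) ∧ PrefixDom G i (D i) ∧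
      (G.induce (↑(D i) : Set (Fin n))).Connected) ∧
    IsIncConnDomSet G (D n) := by
  have main : ∀ i : ℕ, 1 ≤ i → i ≤ n → (∀ v ∈ D i, v.val < i) ∧ PrefixDom G i (D i) ∧
      (G.induce (↑(D i) : Set (Fin n))).Connected := by
    intro i
    induction i with
    | zero => intro h1 _; exact absurd h1 (by omega)
    | succ i ih =>
      intro h1 h2
      by_cases hi0 : i = 0
      · subst hi0
        rw [hD1]
        refine ⟨?_, ?_, ?_⟩
        · intro v hv
          have : v = (⟨0, hn⟩ : Fin n) := Finset.mem_singleton.mp hv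
          subst this; simp
        · intro v hv
          left
          have : v = (⟨0, hn⟩ : Fin n) := Fin.ext (by simp only [Fin.val_mk]; omega)
          subst this; simp
        · haveI : Nonempty (↑(↑({(⟨0, hn⟩ : Fin n)} : Finset (Fin n)) : Set (Fin n))) :=
            ⟨⟨⟨0, hn⟩, by simp⟩⟩
          refine SimpleGraph.Connected.mk ?_
          · intro a b
            have : a = b := Subtype.ext (by
              have ha := a.2; have hb := b.2
              simp only [Finset.coe_singleton, Set.mem_singleton_iff] at ha hb
              rw [ha, hb])
            exact this ▸ SimpleGraph.Reachable.refl a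
      · have hi1 : 1 ≤ i := by omega
        have hin : i < n := by omega
        obtain ⟨hsub, hdom, hc⟩ := ih hi1 (by omega)
        obtain ⟨hyes, hno⟩ := hstep i hin hi1
        by_cases h : ((⟨i, hin⟩ : Fin n) ∈ D i ∨ ∃ u ∈ D i, G.Adj u ⟨i, hin⟩)
        · rw [hyes h]
          refine ⟨fun v hv => by have := hsub v hv; omega, ?_, hc⟩
          intro v hv
          rcases Nat.lt_succ_iff_lt_or_eq.mp hv with h' | h'
          · exact hdom v h'
          · have hv' : v = (⟨i, hin⟩ : Fin n) := Fin.ext h'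
            subst hv'; exact h
        · obtain ⟨u, hul, huadj, heq⟩ := hno h
          have hu_not : u ∉ D i := fun hu => h (Or.inr ⟨u, hu, huadj⟩)
          rcases hdom u hul with hw | ⟨w, hwD, hwadj⟩
          · exact absurd hw hu_not
          rw [heq]
          refine ⟨?_, ?_, ?_⟩
          · intro v hv
            rcases Finset.mem_union.mp hv with hv | hv
            · have := hsub v hv; omega
            · have : v = u := Finset.mem_singleton.mp hv
              subst this; omega
          · intro v hv
            rcases Nat.lt_succ_iff_lt_or_eq.mp hv with h' | h'
            · rcases hdom v h' with hv' | ⟨x, hx, hxadj⟩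
              · exact Or.inl (Finset.mem_union_left _ hv')
              · exact Or.inr ⟨x, Finset.mem_union_left _ hx, hxadj⟩
            · have hv' : v = (⟨i, hin⟩ : Fin n) := Fin.ext h'
              subst hv'
              exact Or.inr ⟨u, Finset.mem_union_right _ (Finset.mem_singleton_self u), huadj⟩
          · -- connectivity of D i ∪ {u}
            have hw' : (w : Fin n) ∈ (↑(D i ∪ {u}) : Set (Fin n)) := by simp [hwD]
            have hu' : (u : Fin n) ∈ (↑(D i ∪ {u}) : Set (Fin n)) := by simp
            have hmem : ∀ x ∈ D i, x ∈ (↑(D i ∪ {u}) : Set (Fin n)) := by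
              intro x hx; simp [hx]
            let f : G.induce (↑(D i) : Set (Fin n)) →g G.induce (↑(D i ∪ {u}) : Set (Fin n)) :=
              ⟨fun x => ⟨x.1, hmem x.1 x.2⟩, fun {a b} hab => hab⟩
            have key : ∀ x : (↑(D i ∪ {u}) : Set (Fin n)),
                (G.induce (↑(D i ∪ {u}) : Set (Fin n))).Reachable x ⟨w, hw'⟩ := by
              intro x
              have hx2 : x.1 ∈ D i ∪ {u} := x.2
              rcases Finset.mem_union.mp hx2 with hx | hx
              · have hr := (hc.preconnected ⟨x.1, hx⟩ ⟨w, hwD⟩).map f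
                have e1 : f ⟨x.1, hx⟩ = x := Subtype.ext rfl
                have e2 : f ⟨w, hwD⟩ = ⟨w, hw'⟩ := Subtype.ext rfl
                rwa [e1, e2] at hr
              · have hxu : x.1 = u := Finset.mem_singleton.mp hx
                have hadj : (G.induce (↑(D i ∪ {u}) : Set (Fin n))).Adj ⟨w, hw'⟩ x := by
                  show G.Adj w x.1
                  rw [hxu]; exact hwadj
                exact hadj.reachable.symm
            haveI : Nonempty (↑(↑(D i ∪ {u}) : Set (Fin n))) := ⟨⟨w, hw'⟩⟩
            exact SimpleGraph.Connected.mk (fun a b => (key a).trans (key b).symm)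
  refine ⟨main, D, ⟨⟨?_, fun i h1 h2 => ⟨(main i h1 h2).1, (main i h1 h2).2.1⟩⟩,
    fun i h1 h2 => (main i h1 h2).2.2⟩, rfl⟩
  intro i h1 h2
  obtain ⟨hyes, hno⟩ := hstep i h2 h1
  by_cases h : ((⟨i, h2⟩ : Fin n) ∈ D i ∨ ∃ u ∈ D i, G.Adj u ⟨i, h2⟩)
  · rw [hyes h]
  · obtain ⟨u, _, _, heq⟩ := hno h
    rw [heq]
    exact Finset.subset_union_left
end

section
/- For every Δ ≥ 2 and i ≥ 1, let G be the disjoint union of i copies of the star K_{1,Δ} on n = i(Δ + 1) vertices, with the vertices listed so that the stars are presented one after another and, within each star, all Δ leaves arrive before the center. Then every incremental dominating set of G has size at least iΔ, while the minimum size of a dominating set of G is γ(G) = i. -/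
/-- The disjoint union of `k` copies of the star `K_{1,Δ}` on `k(Δ+1)` vertices.
The `j`-th star occupies the consecutive block of vertices with values in
`[j(Δ+1), (j+1)(Δ+1))`; within each block the last vertex (value `≡ Δ mod Δ+1`)
is the center of the star and the earlier `Δ` vertices are its leaves, so in the
natural ordering the stars are presented one after another and in each star all
leaves arrive before the center. -/
def stars (k Δ : ℕ) : SimpleGraph (Fin (k * (Δ + 1))) :=
  SimpleGraph.fromRel (fun u v =>
    u.val / (Δ + 1) = v.val / (Δ + 1) ∧ u.val % (Δ + 1) = Δ)


lemma stars_adj {k Δ : ℕ} {u v : Fin (k * (Δ + 1))} :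
    (stars k Δ).Adj u v ↔ u ≠ v ∧ u.val / (Δ + 1) = v.val / (Δ + 1) ∧
      (u.val % (Δ + 1) = Δ ∨ v.val % (Δ + 1) = Δ) := by
  simp only [stars, SimpleGraph.fromRel_adj]
  constructor
  · rintro ⟨hne, ⟨hb, hc⟩ | ⟨hb, hc⟩⟩
    · exact ⟨hne, hb, Or.inl hc⟩
    · exact ⟨hne, hb.symm, Or.inr hc⟩
  · rintro ⟨hne, hb, hc | hc⟩
    · exact ⟨hne, Or.inl ⟨hb, hc⟩⟩
    · exact ⟨hne, Or.inr ⟨hb.symm, hc⟩⟩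

lemma star_div_eq {Δ j r : ℕ} (hr : r < Δ + 1) : (j * (Δ + 1) + r) / (Δ + 1) = j := by
  rw [add_comm, Nat.add_mul_div_right _ _ (Nat.succ_pos Δ), Nat.div_eq_of_lt hr, zero_add]

lemma star_mod_eq {Δ j r : ℕ} (hr : r < Δ + 1) : (j * (Δ + 1) + r) % (Δ + 1) = r := by
  rw [add_comm, Nat.add_mul_mod_self_right, Nat.mod_eq_of_lt hr]

lemma star_lt_bound {k Δ j r : ℕ} (hj : j < k) (hr : r < Δ + 1) :
    j * (Δ + 1) + r < k * (Δ + 1) := by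
  calc j * (Δ + 1) + r < (j + 1) * (Δ + 1) := by
        rw [add_mul, one_mul]; exact Nat.add_lt_add_left hr _
    _ ≤ k * (Δ + 1) := Nat.mul_le_mul_right _ hj

/-- For every `Δ ≥ 2` and `k ≥ 1`, in the disjoint union of `k`
stars `K_{1,Δ}` presented star by star with leaves before centers, every
incremental dominating set has size at least `kΔ`, while the minimum size of a
dominating set is `γ(G) = k`. -/
theorem stars_inc_dominating_lower_bound (k Δ : ℕ) (hΔ : 2 ≤ Δ) (hk : 1 ≤ k) :
    (∀ R : Finset (Fin (k * (Δ + 1))), IsIncDomSet (stars k Δ) R →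
      k * Δ ≤ R.card) ∧
    IsLeast {m : ℕ | ∃ S : Finset (Fin (k * (Δ + 1))),
      IsDomSet (stars k Δ) S ∧ S.card = m} k := by
  have hpos : 0 < Δ + 1 := Nat.succ_pos Δ
  constructor
  · rintro R ⟨D, ⟨hmono, hdom⟩, rfl⟩
    have hsub : ∀ i m : ℕ, 1 ≤ i → i ≤ m → m ≤ k * (Δ + 1) → D i ⊆ D m := by
      intro i m hi
      induction m with
      | zero => intro him _; exact absurd (hi.trans him) (by omega)
      | succ m ih =>
        intro him hm
        rcases Nat.lt_or_ge i (m + 1) with h | h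
        · exact ((ih (by omega)) (by omega)).trans (hmono m (by omega) (by omega))
        · have : i = m + 1 := by omega
          subst this
          exact Finset.Subset.refl _
    have hleaf : ∀ (j r : ℕ), j < k → r < Δ → ∀ v : Fin (k * (Δ + 1)),
        v.val = j * (Δ + 1) + r → v ∈ D (k * (Δ + 1)) := by
      intro j r hj hr v hv
      set i := j * (Δ + 1) + Δ with hi
      have hin : i ≤ k * (Δ + 1) := le_of_lt (star_lt_bound hj (Nat.lt_succ_self Δ))
      have hvi : v.val < i := by omega
      have hmem : v ∈ D i := by
        rcases (hdom i (by omega) hin).2 v hvi with h | ⟨u, hu, hadj⟩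
        · exact h
        · exfalso
          have hu' : u.val < i := (hdom i (by omega) hin).1 u hu
          rw [stars_adj] at hadj
          obtain ⟨_, hb, hc | hc⟩ := hadj
          · have hvdiv : v.val / (Δ + 1) = j := by rw [hv]; exact star_div_eq (by omega)
            have hdm := Nat.div_add_mod u.val (Δ + 1)
            rw [hb, hvdiv, hc, mul_comm] at hdm
            have hu'' : (u : ℕ) < j * (Δ + 1) + Δ := hu'
            linarith
          · have hvmod : v.val % (Δ + 1) = r := by rw [hv]; exact star_mod_eq (by omega)
            omega
      exact hsub i (k * (Δ + 1)) (by omega) (by omega) le_rfl hmem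
    have hcard : (Finset.univ : Finset (Fin k × Fin Δ)).card ≤ (D (k * (Δ + 1))).card := by
      apply Finset.card_le_card_of_injOn
        (fun p => (⟨p.1.val * (Δ + 1) + p.2.val, star_lt_bound p.1.isLt (by omega)⟩ :
          Fin (k * (Δ + 1))))
      · intro p _
        exact hleaf p.1.val p.2.val p.1.isLt p.2.isLt _ rfl
      · intro p _ q _ heq
        have hval : p.1.val * (Δ + 1) + p.2.val = q.1.val * (Δ + 1) + q.2.val :=
          congrArg Fin.val heq
        have h1 : p.1.val = q.1.val := by
          have := congrArg (· / (Δ + 1)) hval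
          simpa [star_div_eq (show (p.2 : ℕ) < Δ + 1 by omega),
            star_div_eq (show (q.2 : ℕ) < Δ + 1 by omega)] using this
        have h2 : p.2.val = q.2.val := by
          have := congrArg (· % (Δ + 1)) hval
          simpa [star_mod_eq (show (p.2 : ℕ) < Δ + 1 by omega),
            star_mod_eq (show (q.2 : ℕ) < Δ + 1 by omega)] using this
        exact Prod.ext (Fin.ext h1) (Fin.ext h2)
    simpa [Finset.card_univ] using hcard
  · constructor
    · refine ⟨Finset.image (fun j : Fin k =>
        (⟨j.val * (Δ + 1) + Δ, star_lt_bound j.isLt (Nat.lt_succ_self Δ)⟩ :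
          Fin (k * (Δ + 1)))) Finset.univ, ?_, ?_⟩
      · intro v
        by_cases h : v.val % (Δ + 1) = Δ
        · left
          rw [Finset.mem_image]
          refine ⟨⟨v.val / (Δ + 1), ?_⟩, Finset.mem_univ _, ?_⟩
          · exact (Nat.div_lt_iff_lt_mul hpos).2 v.isLt
          · apply Fin.ext
            simpa [h, Nat.mul_comm] using Nat.div_add_mod v.val (Δ + 1)
        · right
          refine ⟨⟨v.val / (Δ + 1) * (Δ + 1) + Δ,
            star_lt_bound ((Nat.div_lt_iff_lt_mul hpos).2 v.isLt) (Nat.lt_succ_self Δ)⟩, ?_, ?_⟩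
          · rw [Finset.mem_image]
            exact ⟨⟨v.val / (Δ + 1), (Nat.div_lt_iff_lt_mul hpos).2 v.isLt⟩,
              Finset.mem_univ _, rfl⟩
          · rw [stars_adj]
            refine ⟨?_, ?_, Or.inl (star_mod_eq (Nat.lt_succ_self Δ))⟩
            · intro heq
              apply h
              rw [← heq]
              exact star_mod_eq (Nat.lt_succ_self Δ)
            · exact star_div_eq (Nat.lt_succ_self Δ)
      · rw [Finset.card_image_of_injective _ ?_, Finset.card_univ, Fintype.card_fin]
        intro a b hab
        have hval : a.val * (Δ + 1) + Δ = b.val * (Δ + 1) + Δ := congrArg Fin.val hab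
        have := congrArg (· / (Δ + 1)) hval
        apply Fin.ext
        simpa [star_div_eq (Nat.lt_succ_self Δ)] using this
    · rintro m ⟨S, hS, rfl⟩
      have himg : Finset.range k ⊆ S.image (fun v : Fin (k * (Δ + 1)) => v.val / (Δ + 1)) := by
        intro j hj
        rw [Finset.mem_range] at hj
        set c : Fin (k * (Δ + 1)) := ⟨j * (Δ + 1) + Δ, star_lt_bound hj (Nat.lt_succ_self Δ)⟩
        have hcdiv : c.val / (Δ + 1) = j := star_div_eq (Nat.lt_succ_self Δ)
        rw [Finset.mem_image]
        rcases hS c with h | ⟨u, hu, hadj⟩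
        · exact ⟨c, h, hcdiv⟩
        · rw [stars_adj] at hadj
          exact ⟨u, hu, hadj.2.1.trans hcdiv⟩
      calc k = (Finset.range k).card := (Finset.card_range k).symm
        _ ≤ (S.image (fun v : Fin (k * (Δ + 1)) => v.val / (Δ + 1))).card :=
            Finset.card_le_card himg
        _ ≤ S.card := Finset.card_image_le
end

section
/- Let G be a graph with maximum degree Δ ≥ 1. Then for any two independent dominating sets D and S of G, |D| ≤ Δ·|S|; in particular, every independent dominating set of G has size at most Δ·γ_I(G), where γ_I(G) is the minimum size of an independent dominating set of G. -/
/-- Let `G` be a graph with maximum degree `Δ ≥ 1`. Then for any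
two independent dominating sets `D` and `S` of `G`, `|D| ≤ Δ·|S|`. -/
theorem independent_dominating_card_le {V : Type*} [Fintype V]
    (G : SimpleGraph V) [DecidableRel G.Adj] (hΔ : 1 ≤ G.maxDegree)
    (D S : Finset V)
    (hD : IsDomSet G D ∧ ∀ u ∈ D, ∀ v ∈ D, ¬ G.Adj u v)
    (hS : IsDomSet G S ∧ ∀ u ∈ S, ∀ v ∈ S, ¬ G.Adj u v) :
    D.card ≤ G.maxDegree * S.card := by
  classical
  obtain ⟨hSdom, -⟩ := hS
  obtain ⟨-, hDind⟩ := hD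
  -- for each v, either v ∈ S or it has a neighbor in S
  have hchoice : ∀ v : V, ∃ u ∈ S, u = v ∨ G.Adj u v := by
    intro v
    rcases hSdom v with h | ⟨u, hu, hadj⟩
    · exact ⟨v, h, Or.inl rfl⟩
    · exact ⟨u, hu, Or.inr hadj⟩
  choose f hfS hf using hchoice
  apply Finset.card_le_mul_card_image_of_maps_to (f := f) (fun a _ => hfS a)
  intro s hs
  by_cases hsD : s ∈ D
  · -- fiber is a subset of {s}
    have : {a ∈ D | f a = s} ⊆ {s} := by
      intro a ha
      simp only [Finset.mem_filter] at ha
      obtain ⟨haD, hfa⟩ := ha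
      rcases hf a with h | h
      · simp [← hfa, h]
      · exact absurd (hfa ▸ h) (hDind s hsD a haD)
    calc {a ∈ D | f a = s}.card ≤ 1 := by
          simpa using Finset.card_le_card this
      _ ≤ G.maxDegree := hΔ
  · have : {a ∈ D | f a = s} ⊆ G.neighborFinset s := by
      intro a ha
      simp only [Finset.mem_filter] at ha
      obtain ⟨haD, hfa⟩ := ha
      rcases hf a with h | h
      · exact absurd ((h.symm.trans hfa) ▸ haD) hsD
      · simpa using hfa ▸ h
    calc {a ∈ D | f a = s}.card ≤ G.degree s := by
          simpa [SimpleGraph.card_neighborFinset_eq_degree] using Finset.card_le_card this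
      _ ≤ G.maxDegree := G.degree_le_maxDegree s
end

section
/- For n ≥ 4, let G be the fan on n vertices given in the adversarial order: v_1, …, v_{n−1} form the path P_{n−1} in the standard order, and the last vertex v_n is adjacent to all of v_1, …, v_{n−1}. Then every incremental dominating set of G has size at least ⌈(n−1)/2⌉, every incremental connected dominating set of G has size at least n − 2, and γ(G) = γ_C(G) = 1. -/
/-- The fan on `n` vertices in the adversarial order: `v_1, …, v_{n-1}` form a path
in the standard order (edges between consecutive values `< n - 1`), and the last
vertex `v_n` (value `n - 1`) is adjacent to all other vertices. -/
def fan (n : ℕ) : SimpleGraph (Fin n) :=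
  SimpleGraph.fromRel (fun u v =>
    (u.val + 1 = v.val ∧ v.val < n - 1) ∨ v.val = n - 1)

/-! When the path vertex `v_{j+1}` (`j + 1 < n`) arrives, it has to be dominated inside `G_{j+1}`,
where its only neighbour is `v_j`; so `v_j` or `v_{j+1}` is kept in every later set, and the
disjoint blocks `{v_1}, {v_2, v_3}, {v_4, v_5}, …` force `⌈(n - 1)/2⌉` vertices. If moreover the
chain is connected, `v_{j+1}` needs a neighbour in `D_{j+1}` even when it is chosen itself, since
`D_{j+1}` also contains `v_1`; hence `v_1, …, v_{n-2}` all lie in the final set. The apex alone is a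
connected dominating set. -/

theorem fan_adj_iff {n : ℕ} {u v : Fin n} :
    (fan n).Adj u v ↔ u ≠ v ∧ ((u.val + 1 = v.val ∧ v.val < n - 1) ∨
      (v.val + 1 = u.val ∧ u.val < n - 1) ∨ u.val = n - 1 ∨ v.val = n - 1) := by
  simp only [fan, SimpleGraph.fromRel_adj]
  tauto

theorem fan_adj_succ_eq {n : ℕ} {u v : Fin n} (h : (fan n).Adj u v) (huv : u.val ≤ v.val)
    (hv : v.val < n - 1) : u.val + 1 = v.val := by
  obtain ⟨hne, hadj⟩ := fan_adj_iff.mp h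
  have : u.val ≠ v.val := fun h => hne (Fin.ext h)
  omega

theorem fan_isDomSet_apex {n : ℕ} (hn : 0 < n) : IsDomSet (fan n) {⟨n - 1, by omega⟩} := by
  intro v
  by_cases hv : v = ⟨n - 1, by omega⟩
  · exact .inl (Finset.mem_singleton.mpr hv)
  · exact .inr ⟨_, Finset.mem_singleton_self _, fan_adj_iff.mpr ⟨Ne.symm hv, by simp⟩⟩

theorem IsDomSet.nonempty {V : Type*} {G : SimpleGraph V} {D : Finset V}
    (hD : IsDomSet G D) (v : V) : D.Nonempty := by
  rcases hD v with hv | ⟨u, hu, -⟩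
  exacts [⟨v, hv⟩, ⟨u, hu⟩]

theorem SimpleGraph.Connected.exists_adj_mem_of_induce {V : Type*} {G : SimpleGraph V}
    {S : Set V} (hS : (G.induce S).Connected) {x y : V} (hx : x ∈ S) (hy : y ∈ S)
    (hxy : x ≠ y) : ∃ u ∈ S, G.Adj x u := by
  have : Nontrivial S := ⟨⟨⟨x, hx⟩, ⟨y, hy⟩, fun h => hxy (congrArg Subtype.val h)⟩⟩
  obtain ⟨u, hu⟩ := hS.preconnected.exists_adj_of_nontrivial ⟨x, hx⟩
  exact ⟨u, u.2, hu⟩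

namespace IncDomChain

variable {n : ℕ} {G : SimpleGraph (Fin n)} {D : ℕ → Finset (Fin n)}

theorem mono_s19 (h : IncDomChain G D) {i j : ℕ} (hi : 1 ≤ i) (hij : i ≤ j) (hj : j ≤ n) :
    D i ⊆ D j := by
  induction j, hij using Nat.le_induction with
  | base => exact subset_rfl
  | succ j hij ih => exact (ih (by omega)).trans (h.1 j (by omega) (by omega))

theorem subset_last (h : IncDomChain G D) {i : ℕ} (hi : 1 ≤ i) (hin : i ≤ n) : D i ⊆ D n :=
  h.mono_s19 hi hin le_rfl

theorem val_lt_of_mem (h : IncDomChain G D) {i : ℕ} (hi : 1 ≤ i) (hin : i ≤ n) {u : Fin n}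
    (hu : u ∈ D i) : u.val < i :=
  (h.2 i hi hin).1 u hu

theorem exists_dominator (h : IncDomChain G D) (v : Fin n) :
    ∃ u ∈ D (v.val + 1), u = v ∨ G.Adj u v := by
  rcases (h.2 (v.val + 1) (by omega) v.isLt).2 v (by omega) with hv | ⟨u, hu, huv⟩
  exacts [⟨v, hv, .inl rfl⟩, ⟨u, hu, .inr huv⟩]

theorem first_mem (h : IncDomChain G D) (hn : 0 < n) : (⟨0, hn⟩ : Fin n) ∈ D 1 := by
  obtain ⟨u, hu, rfl | huv⟩ := h.exists_dominator ⟨0, hn⟩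
  · exact hu
  · have hu0 : u = ⟨0, hn⟩ := Fin.ext (Nat.lt_one_iff.mp (h.val_lt_of_mem le_rfl hn hu))
    exact (G.irrefl (hu0 ▸ huv)).elim

end IncDomChain

theorem IncConnDomChain.exists_adj_mem {n : ℕ} {G : SimpleGraph (Fin n)}
    {D : ℕ → Finset (Fin n)} (h : IncConnDomChain G D) (v : Fin n) (hv : 0 < v.val) :
    ∃ u ∈ D (v.val + 1), G.Adj u v := by
  obtain ⟨u, hu, rfl | huv⟩ := h.1.exists_dominator v
  · have hfirst := h.1.mono_s19 le_rfl (by omega) u.isLt (h.1.first_mem (by omega))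
    obtain ⟨w, hw, huw⟩ := (h.2 _ (by omega) u.isLt).exists_adj_mem_of_induce hu hfirst
      (fun hu0 => by simp [hu0] at hv)
    exact ⟨w, hw, huw.symm⟩
  · exact ⟨u, hu, huv⟩

section Fan

variable {n : ℕ} {R : Finset (Fin n)}

theorem IsIncDomSet.exists_mem_eq_or_succ_eq_fan (hR : IsIncDomSet (fan n) R) (v : Fin n)
    (hv : v.val < n - 1) : ∃ u ∈ R, u = v ∨ u.val + 1 = v.val := by
  obtain ⟨D, hD, rfl⟩ := hR
  obtain ⟨u, hu, huv⟩ := hD.exists_dominator v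
  have hlt := hD.val_lt_of_mem (by omega) v.isLt hu
  exact ⟨u, hD.subset_last (by omega) v.isLt hu,
    huv.imp_right fun hadj => fan_adj_succ_eq hadj (by omega) hv⟩

theorem IsIncConnDomSet.exists_mem_succ_eq_fan (hR : IsIncConnDomSet (fan n) R) (v : Fin n)
    (hv₀ : 0 < v.val) (hv : v.val < n - 1) : ∃ u ∈ R, u.val + 1 = v.val := by
  obtain ⟨D, hD, rfl⟩ := hR
  obtain ⟨u, hu, hadj⟩ := hD.exists_adj_mem v hv₀
  have hlt := hD.1.val_lt_of_mem (by omega) v.isLt hu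
  exact ⟨u, hD.1.subset_last (by omega) v.isLt hu, fan_adj_succ_eq hadj (by omega) hv⟩

theorem IsIncDomSet.half_le_card_fan (hR : IsIncDomSet (fan n) R) : n / 2 ≤ R.card := by
  refine (Finset.card_range _).symm.trans_le (Finset.card_le_card_of_forall_subsingleton
    (fun (k : ℕ) (u : Fin n) => u.val = 2 * k ∨ u.val + 1 = 2 * k) ?_ ?_)
  · intro k hk
    rw [Finset.mem_range] at hk
    obtain ⟨u, hu, huv⟩ :=
      hR.exists_mem_eq_or_succ_eq_fan ⟨2 * k, by omega⟩ (show 2 * k < n - 1 by omega)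
    exact ⟨u, hu, huv.imp_left fun h => by simp [h]⟩
  · rintro u - k₁ ⟨-, hk₁⟩ k₂ ⟨-, hk₂⟩
    omega

theorem IsIncConnDomSet.sub_two_le_card_fan (hR : IsIncConnDomSet (fan n) R) :
    n - 2 ≤ R.card := by
  refine (Finset.card_range _).symm.trans_le (Finset.card_le_card_of_forall_subsingleton
    (fun (k : ℕ) (u : Fin n) => u.val = k) ?_ ?_)
  · intro k hk
    rw [Finset.mem_range] at hk
    obtain ⟨u, hu, hku⟩ :=
      hR.exists_mem_succ_eq_fan ⟨k + 1, by omega⟩ k.succ_pos (show k + 1 < n - 1 by omega)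
    exact ⟨u, hu, Nat.add_right_cancel hku⟩
  · rintro u - k₁ hk₁ k₂ hk₂
    exact hk₁.2.symm.trans hk₂.2

end Fan

/-- For `n ≥ 4`, on the fan in the adversarial order every
incremental dominating set has size at least `⌈(n−1)/2⌉`, every incremental
connected dominating set has size at least `n − 2`, and `γ(G) = γ_C(G) = 1`. -/
theorem fan_inc_dominating_lower_bounds (n : ℕ) (hn : 4 ≤ n) :
    (∀ R : Finset (Fin n), IsIncDomSet (fan n) R → (n - 1 + 1) / 2 ≤ R.card) ∧
    (∀ R : Finset (Fin n), IsIncConnDomSet (fan n) R → n - 2 ≤ R.card) ∧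
    IsLeast {m : ℕ | ∃ S : Finset (Fin n), IsDomSet (fan n) S ∧ S.card = m} 1 ∧
    IsLeast {m : ℕ | ∃ S : Finset (Fin n), IsDomSet (fan n) S ∧
      ((fan n).induce (↑S : Set (Fin n))).Connected ∧ S.card = m} 1 := by
  have hapex := fan_isDomSet_apex (n := n) (by omega)
  refine ⟨fun R hR => ?_, fun R hR => hR.sub_two_le_card_fan,
    ⟨⟨_, hapex, Finset.card_singleton _⟩, ?_⟩, ⟨⟨_, hapex, ?_, Finset.card_singleton _⟩, ?_⟩⟩
  · have := hR.half_le_card_fan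
    omega
  · rintro m ⟨S, hS, rfl⟩
    exact (hS.nonempty ⟨0, by omega⟩).card_pos
  · rw [Finset.coe_singleton, SimpleGraph.induce_singleton_eq_top]
    exact SimpleGraph.connected_top
  · rintro m ⟨S, hS, -, rfl⟩
    exact (hS.nonempty ⟨0, by omega⟩).card_pos
end
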